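/- arXiv:1702.08207 — 9 statements merged into one kernel-verified Lean document; each statement's English description precedes it below -/
import Mathlib

section
/- Let T be a tree whose weight function w satisfies the star condition. Then OPT(T) ≥ max_{v ∈ V} w(v). -/
open scoped Classical
noncomputable section

/-- A search strategy as a decision tree: either declare (guess) that the target is `x`,
or query (ask) vertex `v` and branch on the reply, which—when the target is not `v`—is the
neighbor of `v` in the connected component of `T \ {v}` containing the target. -/
inductive Strategy (V : Type) : Type
  | guess (x : V) : Strategy V
  | ask (v : V) (next : V → Strategy V) : Strategy V

/-- The neighbor of `v` on the unique `v`–`x` path in the tree `G` (identifying the connected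
component of `G - v` containing `x`); junk value `v` when `x = v`. -/
noncomputable def stepTo {V : Type} (G : SimpleGraph V) (v x : V) : V :=
  if h : ∃ u, G.Adj v u ∧ G.dist x u < G.dist x v then h.choose else v

/-- The vertex output by a strategy when the target is `x` (querying the target reveals it). -/
noncomputable def Strategy.run {V : Type} (G : SimpleGraph V) : Strategy V → V → V
  | .guess y, _ => y
  | .ask v next, x => if x = v then v else Strategy.run G (next (stepTo G v x)) x

/-- Total weight of the vertices queried by a strategy when the target is `x`. -/
noncomputable def Strategy.cost {V : Type} (G : SimpleGraph V) (w : V → ℝ) :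
    Strategy V → V → ℝ
  | .guess _, _ => 0
  | .ask v next, x =>
      if x = v then w v else w v + Strategy.cost G w (next (stepTo G v x)) x

/-- A valid search strategy locates every target vertex. -/
def Strategy.IsValid {V : Type} (G : SimpleGraph V) (A : Strategy V) : Prop :=
  ∀ x, A.run G x = x

/-- `COST_A(T)`: worst-case total query weight of strategy `A`. -/
noncomputable def SearchCost {V : Type} (G : SimpleGraph V) (w : V → ℝ) (A : Strategy V) : ℝ :=
  ⨆ x, A.cost G w x

/-- `OPT(T)`: the optimal worst-case search cost over all valid strategies. -/
noncomputable def OPT {V : Type} (G : SimpleGraph V) (w : V → ℝ) : ℝ :=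
  sInf {c | ∃ A : Strategy V, A.IsValid G ∧ SearchCost G w A = c}


/-! ### Auxiliary lemmas -/

section AuxTree

variable {V : Type} {G : SimpleGraph V}

lemma tree_path_unique (hG : G.IsTree) {a b : V} {p q : G.Walk a b}
    (hp : p.IsPath) (hq : q.IsPath) : p = q :=
  (hG.existsUnique_path a b).unique hp hq

lemma tree_path_length (hG : G.IsTree) {a b : V} {p : G.Walk a b}
    (hp : p.IsPath) : p.length = G.dist a b := by
  obtain ⟨q, hq, hl⟩ := hG.isConnected.exists_path_of_dist a b
  rw [tree_path_unique hG hp hq, hl]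

lemma step_unique (hG : G.IsTree) {q x z₁ z₂ : V}
    (h1 : G.Adj q z₁) (h2 : G.Adj q z₂)
    (d1 : G.dist x z₁ < G.dist x q) (d2 : G.dist x z₂ < G.dist x q) : z₁ = z₂ := by
  obtain ⟨p₁, hp₁⟩ := hG.isConnected.exists_walk_length_eq_dist x z₁
  obtain ⟨p₂, hp₂⟩ := hG.isConnected.exists_walk_length_eq_dist x z₂
  have hle₁ : G.dist x q ≤ p₁.length + 1 := by
    have := SimpleGraph.dist_le (p₁.concat h1.symm)
    rwa [SimpleGraph.Walk.length_concat] at this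
  have hle₂ : G.dist x q ≤ p₂.length + 1 := by
    have := SimpleGraph.dist_le (p₂.concat h2.symm)
    rwa [SimpleGraph.Walk.length_concat] at this
  have hW₁ : (p₁.concat h1.symm).IsPath := by
    apply SimpleGraph.Walk.isPath_of_length_eq_dist
    rw [SimpleGraph.Walk.length_concat]
    omega
  have hW₂ : (p₂.concat h2.symm).IsPath := by
    apply SimpleGraph.Walk.isPath_of_length_eq_dist
    rw [SimpleGraph.Walk.length_concat]
    omega
  have heq : p₁.concat h1.symm = p₂.concat h2.symm := tree_path_unique hG hW₁ hW₂
  have hsup := congrArg (fun w => w.reverse.support) heq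
  simp only [SimpleGraph.Walk.reverse_concat, SimpleGraph.Walk.support_cons] at hsup
  have h₁ : p₁.reverse.support = z₁ :: p₁.reverse.support.tail :=
    SimpleGraph.Walk.support_eq_cons _
  have h₂ : p₂.reverse.support = z₂ :: p₂.reverse.support.tail :=
    SimpleGraph.Walk.support_eq_cons _
  rw [h₁, h₂] at hsup
  simp only [List.cons.injEq] at hsup
  exact hsup.2.1

lemma step_exists (hG : G.IsTree) {q x : V} (h : q ≠ x) :
    ∃ z, G.Adj q z ∧ G.dist x z < G.dist x q := by
  obtain ⟨p, hp⟩ := hG.isConnected.exists_walk_length_eq_dist q x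
  have hpos : 0 < G.dist q x := hG.isConnected.pos_dist_of_ne h
  cases p with
  | nil => simp at hpos
  | cons hadj p' =>
    rename_i z
    refine ⟨z, hadj, ?_⟩
    have h1 : G.dist x z ≤ p'.length := by
      rw [SimpleGraph.dist_comm]; exact SimpleGraph.dist_le p'
    have h2 : G.dist x q = p'.length + 1 := by
      rw [SimpleGraph.dist_comm, ← hp, SimpleGraph.Walk.length_cons]
    omega

lemma stepTo_eq (hG : G.IsTree) {q x z : V} (hz : G.Adj q z)
    (hd : G.dist x z < G.dist x q) : stepTo G q x = z := by
  have hex : ∃ u, G.Adj q u ∧ G.dist x u < G.dist x q := ⟨z, hz, hd⟩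
  rw [stepTo, dif_pos hex]
  exact step_unique hG hex.choose_spec.1 hz hex.choose_spec.2 hd

lemma stepTo_agree (hG : G.IsTree) {u v q : V} (huv : G.Adj u v)
    (hqu : q ≠ u) (hqv : q ≠ v) : stepTo G q v = stepTo G q u := by
  obtain ⟨z, hz, hd⟩ := step_exists hG hqv
  suffices hd' : G.dist u z < G.dist u q by
    rw [stepTo_eq hG hz hd, stepTo_eq hG hz hd']
  have hzv : G.dist z v + 1 = G.dist q v := by
    have ht : G.dist q v ≤ G.dist q z + G.dist z v := hG.isConnected.dist_triangle
    have h1 : G.dist q z = 1 := SimpleGraph.dist_eq_one_iff_adj.mpr hz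
    have h2 : G.dist v z < G.dist v q := hd
    rw [SimpleGraph.dist_comm (u := v) (v := z), SimpleGraph.dist_comm (u := v) (v := q)] at h2
    omega
  obtain ⟨pz, hpz, hpzl⟩ := hG.isConnected.exists_path_of_dist z v
  have hP : (SimpleGraph.Walk.cons hz pz).IsPath := by
    apply SimpleGraph.Walk.isPath_of_length_eq_dist
    rw [SimpleGraph.Walk.length_cons]
    omega
  have hqnp : q ∉ pz.support := ((SimpleGraph.Walk.cons_isPath_iff hz pz).mp hP).2
  by_cases hu : u ∈ pz.support
  · have htp : (pz.takeUntil u hu).IsPath := hpz.takeUntil hu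
    have hQ : (SimpleGraph.Walk.cons hz (pz.takeUntil u hu)).IsPath := by
      rw [SimpleGraph.Walk.cons_isPath_iff]
      exact ⟨htp, fun hc => hqnp (SimpleGraph.Walk.support_takeUntil_subset pz hu hc)⟩
    have hdQ : G.dist q u = (pz.takeUntil u hu).length + 1 := by
      rw [← tree_path_length hG hQ, SimpleGraph.Walk.length_cons]
    have hzu : G.dist z u ≤ (pz.takeUntil u hu).length := SimpleGraph.dist_le _
    rw [SimpleGraph.dist_comm (u := u) (v := z), SimpleGraph.dist_comm (u := u) (v := q)]
    omega
  · have hW : ((SimpleGraph.Walk.cons hz pz).concat huv.symm).IsPath := by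
      rw [← SimpleGraph.Walk.isPath_reverse_iff, SimpleGraph.Walk.reverse_concat,
        SimpleGraph.Walk.cons_isPath_iff]
      refine ⟨(SimpleGraph.Walk.isPath_reverse_iff _).mpr hP, ?_⟩
      rw [SimpleGraph.Walk.support_reverse, List.mem_reverse,
        SimpleGraph.Walk.support_cons]
      simp only [List.mem_cons]
      rintro (rfl | hc)
      · exact hqu rfl
      · exact hu hc
    have hdW : G.dist q u = G.dist q v + 1 := by
      rw [← tree_path_length hG hW, SimpleGraph.Walk.length_concat,
        SimpleGraph.Walk.length_cons]
      omega
    have hzu : G.dist z u ≤ G.dist z v + 1 := by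
      have := SimpleGraph.dist_le (pz.concat huv.symm)
      rwa [SimpleGraph.Walk.length_concat, hpzl] at this
    rw [SimpleGraph.dist_comm (u := u) (v := z), SimpleGraph.dist_comm (u := u) (v := q)]
    omega

/-- The list of vertices queried by a strategy when the target is `x`. -/
noncomputable def qlist (G : SimpleGraph V) : Strategy V → V → List V
  | .guess _, _ => []
  | .ask q next, x => if x = q then [q] else q :: qlist G (next (stepTo G q x)) x

lemma cost_eq_qlist (w : V → ℝ) (A : Strategy V) (x : V) :
    A.cost G w x = ((qlist G A x).map w).sum := by
  induction A with
  | guess y => simp [Strategy.cost, qlist]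
  | ask q next ih =>
    by_cases h : x = q <;> simp [Strategy.cost, qlist, h, ih]

lemma head_mem_qlist (q : V) (next : V → Strategy V) (x : V) :
    q ∈ qlist G (.ask q next) x := by
  rw [qlist]
  by_cases h : x = q <;> simp [h]

lemma divergence (hG : G.IsTree) (A : Strategy V) {u v : V} (huv : G.Adj v u)
    (hne : A.run G v ≠ A.run G u) : v ∈ qlist G A v ∨ u ∈ qlist G A v := by
  induction A with
  | guess y => simp [Strategy.run] at hne
  | ask q next ih =>
    by_cases hv : v = q
    · exact Or.inl (by rw [hv]; exact head_mem_qlist q next q)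
    by_cases hu : u = q
    · exact Or.inr (by rw [hu]; exact head_mem_qlist q next v)
    · have hstep : stepTo G q u = stepTo G q v :=
        stepTo_agree hG huv (fun h => hv h.symm) (fun h => hu h.symm)
      simp only [Strategy.run, if_neg hv, if_neg hu, hstep] at hne
      have := ih (stepTo G q v) hne
      rw [qlist, if_neg hv]
      rcases this with h | h
      · exact Or.inl (List.mem_cons_of_mem q h)
      · exact Or.inr (List.mem_cons_of_mem q h)

/-- A trivial valid strategy: query every vertex in a list. -/
noncomputable def listStrat (d : V) : List V → Strategy V
  | [] => .guess d
  | q :: l => .ask q (fun _ => listStrat d l)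

lemma listStrat_run (G : SimpleGraph V) (d : V) (l : List V) (x : V) (hx : x ∈ l) :
    (listStrat d l).run G x = x := by
  induction l with
  | nil => simp at hx
  | cons q l ih =>
    rw [listStrat, Strategy.run]
    by_cases h : x = q
    · simp [h]
    · rw [if_neg h]
      exact ih (by simpa [h] using hx)

lemma finset_sum_le_list_sum (w : V → ℝ) (hw : ∀ v, 0 ≤ w v) (l : List V) (S : Finset V)
    (hsub : ∀ u ∈ S, u ∈ l) : ∑ u ∈ S, w u ≤ (l.map w).sum := by
  induction l generalizing S with
  | nil =>
    have : S = ∅ := Finset.eq_empty_of_forall_notMem (fun u hu => by simpa using hsub u hu)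
    simp [this]
  | cons q l ih =>
    simp only [List.map_cons, List.sum_cons]
    by_cases hq : q ∈ S
    · rw [← Finset.add_sum_erase _ _ hq]
      refine add_le_add (le_refl _) (ih _ fun u hu => ?_)
      have hul := hsub u (Finset.mem_of_mem_erase hu)
      have : u ≠ q := Finset.ne_of_mem_erase hu
      simpa [this] using hul
    · have h := ih S fun u hu => by
        have hul := hsub u hu
        have : u ≠ q := fun h => hq (h ▸ hu)
        simpa [this] using hul
      linarith [hw q]

end AuxTree


/-- For a tree whose nonnegative weight function satisfies the star condition,
`OPT(T) ≥ max_{v ∈ V} w(v)`. -/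
theorem stmt1 {V : Type} [Fintype V] (G : SimpleGraph V) (hG : G.IsTree)
    (w : V → ℝ) (hw0 : ∀ v, 0 ≤ w v)
    (hstar : ∀ v, w v ≤ ∑ u ∈ G.neighborFinset v, w u) :
    ∀ v, w v ≤ OPT G w := by
  intro v
  have hne : {c | ∃ A : Strategy V, A.IsValid G ∧ SearchCost G w A = c}.Nonempty := by
    refine ⟨SearchCost G w (listStrat v Finset.univ.toList), listStrat v Finset.univ.toList, ?_, rfl⟩
    intro x
    exact listStrat_run G v _ x (by simp [Finset.mem_toList])
  apply le_csInf hne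
  rintro c ⟨A, hA, rfl⟩
  have key : w v ≤ A.cost G w v := by
    rw [cost_eq_qlist]
    by_cases hv : v ∈ qlist G A v
    · exact List.single_le_sum (l := (qlist G A v).map w)
        (fun x hx => by obtain ⟨u, -, rfl⟩ := List.mem_map.mp hx; exact hw0 u) _
        (List.mem_map_of_mem (f := w) hv)
    · have hall : ∀ u ∈ G.neighborFinset v, u ∈ qlist G A v := by
        intro u hu
        rw [SimpleGraph.mem_neighborFinset] at hu
        have hrun : A.run G v ≠ A.run G u := by
          rw [hA v, hA u]; exact hu.ne
        rcases divergence hG A hu hrun with h | h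
        · exact absurd h hv
        · exact h
      calc w v ≤ ∑ u ∈ G.neighborFinset v, w u := hstar v
        _ ≤ ((qlist G A v).map w).sum := finset_sum_le_list_sum w hw0 _ _ hall
  calc w v ≤ A.cost G w v := key
    _ ≤ ⨆ x, A.cost G w x :=
        le_ciSup (Set.Finite.bddAbove (Set.finite_range _)) v
end
end

section
/- Let T be a tree on n vertices with weight function w satisfying max_v w(v) = 1 and the star condition. Fix positive integers c and a and set ω = a/(cn). Let T′ be the tree with the same vertices and edges as T and with rounded weights w′(v) = ⌈w(v)⌉_ω if w(v) > cω, and w′(v) = ⌈w(v)⌉_{1/(cn)} otherwise, where ⌈x⌉_δ = δ⌈x/δ⌉. Then OPT(T) ≤ OPT(T′) ≤ (1 + 2/c)·OPT(T). -/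
open scoped Classical
noncomputable section

/-- `⌈x⌉_δ = δ·⌈x/δ⌉`: rounding `x` up to the nearest integer multiple of `δ`. -/
noncomputable def ceilMul (x δ : ℝ) : ℝ := δ * ⌈x / δ⌉

namespace Stmt5Proof
open SimpleGraph

variable {V : Type}

lemma dist_split {G : SimpleGraph V} {a b z : V} (p : G.Walk a b) (hz : z ∈ p.support) :
    G.dist a z + G.dist z b ≤ p.length := by
  calc G.dist a z + G.dist z b ≤ (p.takeUntil z hz).length + (p.dropUntil z hz).length :=
        add_le_add (dist_le _) (dist_le _)
    _ = p.length := by rw [← Walk.length_append, p.take_spec hz]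

lemma exists_step {G : SimpleGraph V} (hconn : G.Connected) {x q : V} (hxq : x ≠ q) :
    ∃ s, G.Adj q s ∧ G.dist x s < G.dist x q := by
  obtain ⟨p, hp⟩ := hconn.exists_walk_length_eq_dist q x
  cases p with
  | nil => exact absurd rfl hxq.symm
  | @cons _ s _ h p' =>
    refine ⟨s, h, ?_⟩
    have h1 : G.dist x s ≤ p'.length := by rw [SimpleGraph.dist_comm]; exact dist_le p'
    have h2 : p'.length + 1 = G.dist q x := by simpa using hp
    rw [SimpleGraph.dist_comm (u := x) (v := q)]
    omega

lemma stepTo_spec {G : SimpleGraph V} (hconn : G.Connected) {x q : V} (hxq : x ≠ q) :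
    G.Adj q (stepTo G q x) ∧ G.dist x (stepTo G q x) < G.dist x q := by
  have h := exists_step hconn hxq
  rw [stepTo, dif_pos h]
  exact h.choose_spec

lemma dist_ne_of_adj {G : SimpleGraph V} (hG : G.IsTree) {s q : V} (h : G.Adj s q) (z : V) :
    G.dist z q ≠ G.dist z s := by
  intro he
  obtain ⟨p1, hp1, hl1⟩ := hG.isConnected.exists_path_of_dist z q
  obtain ⟨p2, hp2, hl2⟩ := hG.isConnected.exists_path_of_dist z s
  have hsq : G.dist s q = 1 := dist_eq_one_iff_adj.mpr h
  have hqns : q ∉ p2.support := by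
    intro hq
    have h1 := dist_split p2 hq
    have h2 : G.dist q s = 1 := by rw [SimpleGraph.dist_comm]; exact hsq
    omega
  have hpath : (p2.concat h).IsPath := by
    rw [← Walk.isPath_reverse_iff, Walk.reverse_concat]
    exact (hp2.reverse).cons (by simpa using hqns)
  have heq := (hG.existsUnique_path z q).unique hp1 hpath
  have hlen := congrArg Walk.length heq
  rw [Walk.length_concat] at hlen
  omega

lemma step_unique {G : SimpleGraph V} (hG : G.IsTree) {x q s₁ s₂ : V}
    (h1 : G.Adj q s₁ ∧ G.dist x s₁ < G.dist x q)
    (h2 : G.Adj q s₂ ∧ G.dist x s₂ < G.dist x q) : s₁ = s₂ := by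
  have hconn := hG.isConnected
  have htri1 : G.dist x q ≤ G.dist x s₁ + 1 := by
    have := hconn.dist_triangle (u := x) (v := s₁) (w := q)
    have h1' : G.dist s₁ q = 1 := dist_eq_one_iff_adj.mpr h1.1.symm
    omega
  have htri2 : G.dist x q ≤ G.dist x s₂ + 1 := by
    have := hconn.dist_triangle (u := x) (v := s₂) (w := q)
    have h2' : G.dist s₂ q = 1 := dist_eq_one_iff_adj.mpr h2.1.symm
    omega
  obtain ⟨p1, hp1len⟩ := hconn.exists_walk_length_eq_dist x s₁
  obtain ⟨p2, hp2len⟩ := hconn.exists_walk_length_eq_dist x s₂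
  have hP1len : (p1.concat h1.1.symm).length = G.dist x q := by
    rw [Walk.length_concat]; omega
  have hP2len : (p2.concat h2.1.symm).length = G.dist x q := by
    rw [Walk.length_concat]; omega
  have hP1 : (p1.concat h1.1.symm).IsPath := Walk.isPath_of_length_eq_dist _ hP1len
  have hP2 : (p2.concat h2.1.symm).IsPath := Walk.isPath_of_length_eq_dist _ hP2len
  have heq := (hG.existsUnique_path x q).unique hP1 hP2
  have hmem : s₁ ∈ (p2.concat h2.1.symm).support := by
    rw [← heq, Walk.support_concat]
    rw [List.mem_append]; exact Or.inl p1.end_mem_support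
  rw [Walk.support_concat, List.mem_append] at hmem
  rcases hmem with hmem | hmem
  · have h3 := dist_split p2 hmem
    have h4 : G.dist s₁ s₂ = 0 := by omega
    exact (hconn.dist_eq_zero_iff).mp h4
  · exact absurd (List.mem_singleton.mp hmem ▸ h1.1) G.irrefl

lemma step_pred {G : SimpleGraph V} (hG : G.IsTree) {u v q s : V}
    (huv : G.Adj v u) (hqv : q ≠ v) (hqu : q ≠ u)
    (hs : G.Adj q s ∧ G.dist v s < G.dist v q) :
    G.Adj q s ∧ G.dist u s < G.dist u q := by
  have hconn := hG.isConnected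
  refine ⟨hs.1, ?_⟩
  by_contra hcon
  push_neg at hcon   -- dist u q ≤ dist u s
  -- basic distances
  have hsq1 : G.dist s q = 1 := dist_eq_one_iff_adj.mpr hs.1.symm
  have hqs1 : G.dist q s = 1 := dist_eq_one_iff_adj.mpr hs.1
  have huv1 : G.dist u v = 1 := dist_eq_one_iff_adj.mpr huv.symm
  have hvu1 : G.dist v u = 1 := dist_eq_one_iff_adj.mpr huv
  have htriv : G.dist v q ≤ G.dist v s + G.dist s q := hconn.dist_triangle
  have hvs : G.dist v s + 1 = G.dist v q := by omega
  -- t ≠ e by parity-type lemma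
  have hne : G.dist u q ≠ G.dist u s := dist_ne_of_adj hG hs.1.symm u
  have hte : G.dist u q < G.dist u s := lt_of_le_of_ne hcon hne
  -- e ≤ d
  have he_le : G.dist u s ≤ G.dist u v + G.dist v s := hconn.dist_triangle
  have hd_le : G.dist v q ≤ G.dist v u + G.dist u q := hconn.dist_triangle
  -- so t = d - 1, e = d
  have ht : G.dist u q + 1 = G.dist v q := by omega
  have he : G.dist u s = G.dist v q := by omega
  by_cases hd : G.dist v q = 1
  · have h0 : G.dist u q = 0 := by omega
    exact hqu ((hconn.dist_eq_zero_iff.mp h0).symm)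
  · obtain ⟨puq, hpuq⟩ := hconn.exists_walk_length_eq_dist u q
    obtain ⟨pvs, hpvs⟩ := hconn.exists_walk_length_eq_dist v s
    have hW1len : (Walk.cons huv puq).length = G.dist v q := by
      rw [Walk.length_cons]; omega
    have hW2len : (pvs.concat hs.1.symm).length = G.dist v q := by
      rw [Walk.length_concat]; omega
    have hW1 : (Walk.cons huv puq).IsPath := Walk.isPath_of_length_eq_dist _ hW1len
    have hW2 : (pvs.concat hs.1.symm).IsPath := Walk.isPath_of_length_eq_dist _ hW2len
    have heq := (hG.existsUnique_path v q).unique hW1 hW2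
    have hmem : s ∈ (Walk.cons huv puq).support := by
      rw [heq, Walk.support_concat, List.mem_append]
      exact Or.inl pvs.end_mem_support
    rw [Walk.support_cons, List.mem_cons] at hmem
    rcases hmem with hmem | hmem
    · have : G.dist v s = 0 := by
        rw [hmem]; exact SimpleGraph.dist_self
      omega
    · have h3 := dist_split puq hmem
      omega

lemma stepTo_eq_of_adj {G : SimpleGraph V} (hG : G.IsTree) {q u v : V}
    (huv : G.Adj v u) (hqv : q ≠ v) (hqu : q ≠ u) :
    stepTo G q u = stepTo G q v := by
  have hv := stepTo_spec hG.isConnected (Ne.symm hqv)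
  have hu := stepTo_spec hG.isConnected (Ne.symm hqu)
  exact step_unique hG hu (step_pred hG huv hqv hqu hv)


section Strat
variable {V : Type} {G : SimpleGraph V} {w : V → ℝ}

/-- The set of vertices queried by `A` on target `x`. -/
noncomputable def qset (G : SimpleGraph V) : Strategy V → V → Finset V
  | .guess _, _ => ∅
  | .ask v next, x => if x = v then {v} else insert v (qset G (next (stepTo G v x)) x)

/-- The number of queries made by `A` on target `x`. -/
noncomputable def qcount (G : SimpleGraph V) : Strategy V → V → ℕ
  | .guess _, _ => 0
  | .ask v next, x => if x = v then 1 else 1 + qcount G (next (stepTo G v x)) x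

/-- Skip repeated queries, remembering past answers in `f`. -/
noncomputable def dedup (G : SimpleGraph V) : Strategy V → (V → Option V) → Strategy V
  | .guess y, _ => .guess y
  | .ask v next, f =>
      match f v with
      | some u => dedup G (next u) f
      | none => .ask v (fun u => dedup G (next u) (Function.update f v (some u)))

lemma cost_nonneg (hw : ∀ v, 0 ≤ w v) (A : Strategy V) (x : V) : 0 ≤ A.cost G w x := by
  induction A with
  | guess y => simp [Strategy.cost]
  | ask v next ih =>
    simp only [Strategy.cost]
    split
    · exact hw v
    · exact add_nonneg (hw v) (ih _)

lemma cost_mono {w' : V → ℝ} (h : ∀ v, w v ≤ w' v) (A : Strategy V) (x : V) :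
    A.cost G w x ≤ A.cost G w' x := by
  induction A with
  | guess y => simp [Strategy.cost]
  | ask v next ih =>
    simp only [Strategy.cost]
    split
    · exact h v
    · exact add_le_add (h v) (ih _)

lemma sum_qset_le (hw : ∀ v, 0 ≤ w v) (A : Strategy V) (x : V) :
    ∑ u ∈ qset G A x, w u ≤ A.cost G w x := by
  induction A with
  | guess y => simp [Strategy.cost, qset]
  | ask v next ih =>
    simp only [Strategy.cost, qset]
    split
    · simp
    · by_cases hv : v ∈ qset G (next (stepTo G v x)) x
      · rw [Finset.insert_eq_self.mpr hv]
        exact le_add_of_nonneg_of_le (hw v) (ih _)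
      · rw [Finset.sum_insert hv]
        exact add_le_add le_rfl (ih _)

lemma run_eq_of_not_queried (hG : G.IsTree) {v u : V} (hadj : G.Adj v u) :
    ∀ A : Strategy V, v ∉ qset G A v → u ∉ qset G A v → A.run G u = A.run G v := by
  intro A
  induction A with
  | guess y => intro _ _; simp [Strategy.run]
  | ask q next ih =>
    intro hv hu
    by_cases hvq : v = q
    · exact absurd (by simp [qset, hvq]) hv
    · simp only [qset, if_neg hvq, Finset.mem_insert, not_or] at hv hu
      have huq : ¬ u = q := hu.1
      have hstep : stepTo G q u = stepTo G q v :=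
        stepTo_eq_of_adj hG hadj (fun h => hvq h.symm) (fun h => huq h.symm)
      simp only [Strategy.run, if_neg huq, if_neg hvq, hstep]
      exact ih _ hv.2 hu.2

lemma cost_ge_weight [Fintype V] (hG : G.IsTree) (hw : ∀ v, 0 ≤ w v)
    (hstar : ∀ v, w v ≤ ∑ u ∈ G.neighborFinset v, w u)
    {A : Strategy V} (hA : A.IsValid G) (v : V) : w v ≤ A.cost G w v := by
  by_cases hv : v ∈ qset G A v
  · calc w v ≤ ∑ u ∈ qset G A v, w u := Finset.single_le_sum (fun u _ => hw u) hv
      _ ≤ A.cost G w v := sum_qset_le hw A v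
  · have hsub : G.neighborFinset v ⊆ qset G A v := by
      intro u hu
      by_contra huq
      have hadj : G.Adj v u := (SimpleGraph.mem_neighborFinset G v u).mp hu
      have := run_eq_of_not_queried hG hadj A hv huq
      rw [hA u, hA v] at this
      exact G.irrefl (this ▸ hadj)
    calc w v ≤ ∑ u ∈ G.neighborFinset v, w u := hstar v
      _ ≤ ∑ u ∈ qset G A v, w u :=
        Finset.sum_le_sum_of_subset_of_nonneg hsub (fun u _ _ => hw u)
      _ ≤ A.cost G w v := sum_qset_le hw A v

lemma dedup_run (x : V) :
    ∀ (A : Strategy V) (f : V → Option V),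
      (∀ p z, f p = some z → x ≠ p ∧ stepTo G p x = z) →
      (dedup G A f).run G x = A.run G x := by
  intro A
  induction A with
  | guess y => intro f hf; simp [dedup]
  | ask v next ih =>
    intro f hf
    rcases hfv : f v with _ | u
    · simp only [dedup, hfv]
      by_cases hxv : x = v
      · simp [Strategy.run, hxv]
      · simp only [Strategy.run, if_neg hxv]
        apply ih
        intro p z hp
        by_cases hpv : p = v
        · subst hpv
          rw [Function.update_self] at hp
          exact ⟨hxv, Option.some_injective _ hp⟩
        · rw [Function.update_of_ne hpv] at hp
          exact hf p z hp
    · obtain ⟨hxv, hstep⟩ := hf v u hfv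
      simp only [dedup, hfv]
      rw [ih u f hf]
      simp only [Strategy.run, if_neg hxv, hstep]

lemma dedup_cost (hw : ∀ v, 0 ≤ w v) (x : V) :
    ∀ (A : Strategy V) (f : V → Option V),
      (∀ p z, f p = some z → x ≠ p ∧ stepTo G p x = z) →
      (dedup G A f).cost G w x ≤ A.cost G w x := by
  intro A
  induction A with
  | guess y => intro f hf; simp [dedup, Strategy.cost]
  | ask v next ih =>
    intro f hf
    rcases hfv : f v with _ | u
    · simp only [dedup, hfv]
      by_cases hxv : x = v
      · simp [Strategy.cost, hxv]
      · simp only [Strategy.cost, if_neg hxv]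
        refine add_le_add le_rfl (ih _ _ ?_)
        intro p z hp
        by_cases hpv : p = v
        · subst hpv
          rw [Function.update_self] at hp
          exact ⟨hxv, Option.some_injective _ hp⟩
        · rw [Function.update_of_ne hpv] at hp
          exact hf p z hp
    · obtain ⟨hxv, hstep⟩ := hf v u hfv
      simp only [dedup, hfv]
      calc (dedup G (next u) f).cost G w x ≤ (next u).cost G w x := ih u f hf
        _ ≤ w v + (next (stepTo G v x)).cost G w x := by
            rw [hstep]; exact le_add_of_nonneg_left (hw v)
        _ = (Strategy.ask v next).cost G w x := by
            simp only [Strategy.cost, if_neg hxv]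

lemma dedup_count [Fintype V] (x : V) :
    ∀ (A : Strategy V) (f : V → Option V),
      qcount G (dedup G A f) x ≤ (Finset.univ.filter (fun v => f v = none)).card := by
  intro A
  induction A with
  | guess y => intro f; simp [dedup, qcount]
  | ask v next ih =>
    intro f
    rcases hfv : f v with _ | u
    · have hvmem : v ∈ Finset.univ.filter (fun v' => f v' = none) := by
        simp [hfv]
      have hcard : 1 ≤ (Finset.univ.filter (fun v' => f v' = none)).card :=
        Finset.card_pos.mpr ⟨v, hvmem⟩
      simp only [dedup, hfv, qcount]
      by_cases hxv : x = v
      · rw [if_pos hxv]; exact hcard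
      · rw [if_neg hxv]
        have hset : (Finset.univ.filter
            (fun v' => Function.update f v (some (stepTo G v x)) v' = none)) =
            (Finset.univ.filter (fun v' => f v' = none)).erase v := by
          ext u'
          simp only [Finset.mem_filter, Finset.mem_univ, true_and, Finset.mem_erase]
          by_cases hu' : u' = v
          · subst hu'; simp [Function.update_self]
          · simp [Function.update_of_ne hu', hu']
        have := ih (stepTo G v x) (Function.update f v (some (stepTo G v x)))
        rw [hset, Finset.card_erase_of_mem hvmem] at this
        omega
    · simp only [dedup, hfv]
      exact ih u f

lemma qcount_le_card [Fintype V] (A : Strategy V) (x : V) (f : V → Option V) :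
    qcount G (dedup G A f) x ≤ Fintype.card V :=
  le_trans (dedup_count x A f) (le_trans (Finset.card_le_card (Finset.filter_subset _ _))
    (le_of_eq (Finset.card_univ)))

lemma cost_bound {w' : V → ℝ} {k ε : ℝ}
    (hww : ∀ v, w' v ≤ k * w v + ε) :
    ∀ (A : Strategy V) (x : V),
      A.cost G w' x ≤ k * A.cost G w x + (qcount G A x : ℝ) * ε := by
  intro A
  induction A with
  | guess y => intro x; simp [Strategy.cost, qcount]
  | ask v next ih =>
    intro x
    simp only [Strategy.cost, qcount]
    by_cases hxv : x = v
    · rw [if_pos hxv, if_pos hxv, if_pos hxv]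
      simpa using hww v
    · rw [if_neg hxv, if_neg hxv, if_neg hxv]
      have h1 := hww v
      have h2 := ih (stepTo G v x) x
      push_cast
      linarith

/-- A trivially valid strategy: ask every vertex in the list. -/
noncomputable def askAll (d : V) : List V → Strategy V
  | [] => .guess d
  | v :: r => .ask v (fun _ => askAll d r)

lemma askAll_run (d x : V) : ∀ l : List V, x ∈ l → (askAll d l).run G x = x := by
  intro l
  induction l with
  | nil => simp
  | cons v r ih =>
    intro hx
    simp only [askAll, Strategy.run]
    by_cases hxv : x = v
    · rw [if_pos hxv, hxv]
    · rw [if_neg hxv]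
      exact ih ((List.mem_cons.mp hx).resolve_left hxv)

lemma exists_valid [Fintype V] [Nonempty V] (G : SimpleGraph V) :
    ∃ A : Strategy V, A.IsValid G := by
  refine ⟨askAll (Classical.arbitrary V) Finset.univ.toList, fun x => ?_⟩
  exact askAll_run _ x _ (by simp [Finset.mem_toList])

end Strat

section CeilMul

lemma le_ceilMul {x δ : ℝ} (hδ : 0 < δ) : x ≤ ceilMul x δ := by
  have hne : δ ≠ 0 := hδ.ne'
  rw [ceilMul]
  calc x = δ * (x / δ) := by field_simp
    _ ≤ δ * ⌈x / δ⌉ := mul_le_mul_of_nonneg_left (Int.le_ceil _) hδ.le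

lemma ceilMul_le {x δ : ℝ} (hδ : 0 < δ) : ceilMul x δ ≤ x + δ := by
  have hne : δ ≠ 0 := hδ.ne'
  rw [ceilMul]
  calc δ * (⌈x / δ⌉ : ℝ) ≤ δ * (x / δ + 1) :=
        mul_le_mul_of_nonneg_left (Int.ceil_lt_add_one _).le hδ.le
    _ = x + δ := by field_simp

end CeilMul
end Stmt5Proof

open Stmt5Proof



/-- Rounding the weights of a tree (max weight `1`, star condition) up as in
`w′` with `ω = a/(cn)` changes the optimal cost by at most a `(1 + 2/c)` factor:
`OPT(T) ≤ OPT(T′) ≤ (1 + 2/c)·OPT(T)`. -/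
theorem stmt5 {V : Type} [Fintype V] (G : SimpleGraph V) (hG : G.IsTree)
    (w : V → ℝ) (hw0 : ∀ v, 0 ≤ w v) (hwle : ∀ v, w v ≤ 1) (hwtop : ∃ v, w v = 1)
    (hstar : ∀ v, w v ≤ ∑ u ∈ G.neighborFinset v, w u)
    (c a : ℕ) (hc : 0 < c) (ha : 0 < a)
    (ω : ℝ) (hω : ω = (a : ℝ) / ((c : ℝ) * (Fintype.card V : ℝ)))
    (w' : V → ℝ)
    (hw' : ∀ v, w' v =
      if (c : ℝ) * ω < w v then ceilMul (w v) ω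
      else ceilMul (w v) (1 / ((c : ℝ) * (Fintype.card V : ℝ)))) :
    OPT G w ≤ OPT G w' ∧ OPT G w' ≤ (1 + 2 / (c : ℝ)) * OPT G w := by
  classical
  obtain ⟨v₁, hv₁⟩ := hwtop
  haveI : Nonempty V := ⟨v₁⟩
  set Sfun : (V → ℝ) → Set ℝ :=
    (fun u => {b | ∃ A : Strategy V, A.IsValid G ∧ SearchCost G u A = b}) with hSfun
  have hOPT : ∀ u : V → ℝ, OPT G u = sInf (Sfun u) := fun u => rfl
  have hbddA : ∀ (u : V → ℝ) (A : Strategy V), BddAbove (Set.range fun x => A.cost G u x) :=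
    fun u A => Set.Finite.bddAbove (Set.finite_range _)
  have hcostle : ∀ (u : V → ℝ) (A : Strategy V) (x : V), A.cost G u x ≤ SearchCost G u A :=
    fun u A x => le_ciSup (hbddA u A) x
  obtain ⟨A₀, hA₀⟩ := exists_valid G
  have hSne : ∀ u : V → ℝ, (Sfun u).Nonempty := fun u => ⟨SearchCost G u A₀, A₀, hA₀, rfl⟩
  have hSbdd : ∀ u : V → ℝ, (∀ v, 0 ≤ u v) → BddBelow (Sfun u) := by
    intro u hu
    refine ⟨0, ?_⟩
    rintro b ⟨A, hA, rfl⟩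
    exact le_trans (cost_nonneg hu A v₁) (hcostle u A v₁)
  have hn0 : (0:ℝ) < (Fintype.card V : ℝ) := by exact_mod_cast Fintype.card_pos
  have hc0 : (0:ℝ) < (c : ℝ) := by exact_mod_cast hc
  have ha0 : (0:ℝ) < (a : ℝ) := by exact_mod_cast ha
  have hω0 : 0 < ω := by rw [hω]; positivity
  have hδ0 : 0 < 1 / ((c : ℝ) * (Fintype.card V : ℝ)) := by positivity
  have hle : ∀ v, w v ≤ w' v := by
    intro v
    rw [hw' v]
    by_cases hcase : (c : ℝ) * ω < w v
    · rw [if_pos hcase]; exact le_ceilMul hω0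
    · rw [if_neg hcase]; exact le_ceilMul hδ0
  have hw0' : ∀ v, 0 ≤ w' v := fun v => le_trans (hw0 v) (hle v)
  constructor
  · rw [hOPT w, hOPT w']
    apply le_csInf (hSne w')
    rintro b ⟨A, hA, rfl⟩
    have h1 : sInf (Sfun w) ≤ SearchCost G w A := csInf_le (hSbdd w hw0) ⟨A, hA, rfl⟩
    have h2 : SearchCost G w A ≤ SearchCost G w' A :=
      ciSup_mono (hbddA w' A) (fun x => cost_mono hle A x)
    linarith
  · set k : ℝ := 1 + 2 / (c : ℝ) with hk
    have hk0 : 0 < k := by rw [hk]; positivity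
    have hub : ∀ v, w' v ≤ (1 + 1 / (c : ℝ)) * w v + 1 / ((c : ℝ) * (Fintype.card V : ℝ)) := by
      intro v
      rw [hw' v]
      by_cases hcase : (c : ℝ) * ω < w v
      · rw [if_pos hcase]
        have e1 := ceilMul_le (x := w v) hω0
        have e2 : ω ≤ w v / (c : ℝ) := by
          rw [le_div_iff₀ hc0, mul_comm]; exact hcase.le
        have e3 : (1 + 1 / (c : ℝ)) * w v = w v + w v / (c : ℝ) := by ring
        linarith
      · rw [if_neg hcase]
        have e1 := ceilMul_le (x := w v) hδ0
        have e2 : 0 ≤ (1 / (c : ℝ)) * w v := mul_nonneg (by positivity) (hw0 v)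
        have e3 : (1 + 1 / (c : ℝ)) * w v = w v + (1 / (c : ℝ)) * w v := by ring
        linarith
    have hB1 : ∀ A : Strategy V, A.IsValid G → (1 : ℝ) ≤ SearchCost G w A := by
      intro A hA
      calc (1 : ℝ) = w v₁ := hv₁.symm
        _ ≤ A.cost G w v₁ := cost_ge_weight hG hw0 hstar hA v₁
        _ ≤ SearchCost G w A := hcostle w A v₁
    have key : ∀ b ∈ Sfun w, OPT G w' ≤ k * b := by
      rintro b ⟨A, hA, rfl⟩
      have htriv : ∀ x : V, ∀ p z : V, (fun _ => (none : Option V)) p = some z →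
          x ≠ p ∧ stepTo G p x = z := by
        intro x p z h
        simp at h
      have hvalid' : (dedup G A (fun _ => none)).IsValid G := by
        intro x
        rw [dedup_run x A _ (htriv x)]
        exact hA x
      have h1 : OPT G w' ≤ SearchCost G w' (dedup G A (fun _ => none)) := by
        rw [hOPT w']
        exact csInf_le (hSbdd w' hw0') ⟨dedup G A (fun _ => none), hvalid', rfl⟩
      have h2 : SearchCost G w' (dedup G A (fun _ => none)) ≤ k * SearchCost G w A := by
        apply ciSup_le
        intro x
        have c1 := cost_bound (G := G) hub (dedup G A (fun _ => none)) x
        have c2 : (dedup G A (fun _ => none)).cost G w x ≤ A.cost G w x :=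
          dedup_cost hw0 x A _ (htriv x)
        have c3 : A.cost G w x ≤ SearchCost G w A := hcostle w A x
        have c4 : (qcount G (dedup G A (fun _ => none)) x : ℝ) ≤ (Fintype.card V : ℝ) := by
          exact_mod_cast qcount_le_card A x _
        have c5 : (qcount G (dedup G A (fun _ => none)) x : ℝ) *
            (1 / ((c : ℝ) * (Fintype.card V : ℝ))) ≤ 1 / (c : ℝ) := by
          have e : (Fintype.card V : ℝ) * (1 / ((c : ℝ) * (Fintype.card V : ℝ)))
              = 1 / (c : ℝ) := by
            field_simp
          calc (qcount G (dedup G A (fun _ => none)) x : ℝ) *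
              (1 / ((c : ℝ) * (Fintype.card V : ℝ)))
              ≤ (Fintype.card V : ℝ) * (1 / ((c : ℝ) * (Fintype.card V : ℝ))) :=
                mul_le_mul_of_nonneg_right c4 hδ0.le
            _ = 1 / (c : ℝ) := e
        have c6 : (1 : ℝ) ≤ SearchCost G w A := hB1 A hA
        have c7 : 0 ≤ 1 + 1 / (c : ℝ) := by positivity
        have c8 : (1 + 1 / (c : ℝ)) * ((dedup G A (fun _ => none)).cost G w x)
            ≤ (1 + 1 / (c : ℝ)) * SearchCost G w A :=
          mul_le_mul_of_nonneg_left (c2.trans c3) c7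
        have c9 : (1 / (c : ℝ)) * 1 ≤ (1 / (c : ℝ)) * SearchCost G w A :=
          mul_le_mul_of_nonneg_left c6 (by positivity)
        have c10 : (1 + 1 / (c : ℝ)) * SearchCost G w A + (1 / (c : ℝ)) * SearchCost G w A
            = k * SearchCost G w A := by rw [hk]; ring
        calc Strategy.cost G w' (dedup G A (fun _ => none)) x
            ≤ (1 + 1 / (c : ℝ)) * Strategy.cost G w (dedup G A (fun _ => none)) x +
              (qcount G (dedup G A (fun _ => none)) x : ℝ) *
                (1 / ((c : ℝ) * (Fintype.card V : ℝ))) := c1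
          _ ≤ (1 + 1 / (c : ℝ)) * SearchCost G w A + 1 / (c : ℝ) := add_le_add c8 c5
          _ ≤ (1 + 1 / (c : ℝ)) * SearchCost G w A + (1 / (c : ℝ)) * SearchCost G w A := by
              linarith [c9]
          _ = k * SearchCost G w A := c10
      have h3 : k * SearchCost G w A = k * SearchCost G w A := rfl
      linarith
    have hdiv : OPT G w' / k ≤ sInf (Sfun w) := by
      apply le_csInf (hSne w)
      intro b hb
      rw [div_le_iff₀ hk0]
      rw [mul_comm]
      exact key b hb
    have hfin := (div_le_iff₀ hk0).mp hdiv
    rw [hOPT w]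
    calc OPT G w' ≤ sInf (Sfun w) * k := hfin
      _ = k * sInf (Sfun w) := mul_comm _ _
end
end

section
/- For every tree T on m ≥ 1 vertices there exists a labeling ℓ : V → {1, 2, …, ⌊log₂ m⌋ + 1} such that for any two distinct vertices u and v with ℓ(u) = ℓ(v), the unique u–v path in T contains a vertex z with ℓ(z) < ℓ(u). -/
open scoped Classical
noncomputable section

namespace Stmt8Aux

open SimpleGraph Finset

variable {V : Type} (G : SimpleGraph V)

/-- `x` and `y` are joined by a walk whose support lies in `S`. -/
def Conn (S : Finset V) (x y : V) : Prop :=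
  ∃ p : G.Walk x y, ∀ z ∈ p.support, z ∈ S

/-- The connected component of `x` within the vertex set `S`. -/
noncomputable def comp (S : Finset V) (x : V) : Finset V :=
  S.filter (Conn G S x)

variable {G}

lemma Conn.mem_left {S : Finset V} {x y : V} (h : Conn G S x y) : x ∈ S := by
  obtain ⟨p, hp⟩ := h; exact hp x p.start_mem_support

lemma Conn.mem_right {S : Finset V} {x y : V} (h : Conn G S x y) : y ∈ S := by
  obtain ⟨p, hp⟩ := h; exact hp y p.end_mem_support

lemma conn_refl {S : Finset V} {x : V} (hx : x ∈ S) : Conn G S x x :=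
  ⟨SimpleGraph.Walk.nil, by simpa using hx⟩

lemma Conn.symm {S : Finset V} {x y : V} (h : Conn G S x y) : Conn G S y x := by
  obtain ⟨p, hp⟩ := h
  exact ⟨p.reverse, fun z hz => hp z (by simpa [Walk.support_reverse] using hz)⟩

lemma Conn.trans {S : Finset V} {x y z : V} (h1 : Conn G S x y) (h2 : Conn G S y z) :
    Conn G S x z := by
  obtain ⟨p, hp⟩ := h1; obtain ⟨q, hq⟩ := h2
  refine ⟨p.append q, fun u hu => ?_⟩
  rw [Walk.mem_support_append_iff] at hu
  exact hu.elim (hp u) (hq u)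

lemma Conn.mono {S T : Finset V} {x y : V} (hST : S ⊆ T) (h : Conn G S x y) :
    Conn G T x y := by
  obtain ⟨p, hp⟩ := h; exact ⟨p, fun z hz => hST (hp z hz)⟩

lemma mem_comp {S : Finset V} {x y : V} : y ∈ comp G S x ↔ y ∈ S ∧ Conn G S x y :=
  Finset.mem_filter

lemma mem_comp_self {S : Finset V} {x : V} (hx : x ∈ S) : x ∈ comp G S x :=
  mem_comp.2 ⟨hx, conn_refl hx⟩

lemma comp_subset {S : Finset V} {x : V} : comp G S x ⊆ S := Finset.filter_subset _ _

lemma comp_eq_of_conn {S : Finset V} {x y : V} (h : Conn G S x y) :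
    comp G S x = comp G S y := by
  ext z
  simp only [mem_comp]
  exact ⟨fun ⟨hz, hc⟩ => ⟨hz, h.symm.trans hc⟩, fun ⟨hz, hc⟩ => ⟨hz, h.trans hc⟩⟩

lemma conn_of_mem_support {S : Finset V} {x y z : V} (p : G.Walk x y)
    (hp : ∀ w ∈ p.support, w ∈ S) (hz : z ∈ p.support) : Conn G S x z :=
  ⟨p.takeUntil z hz, fun w hw => hp w (p.support_takeUntil_subset hz hw)⟩

/-- Walks between members of a component can be taken within the component. -/
lemma conn_comp_of {S : Finset V} {v x y : V} (hx : x ∈ comp G S v) (hy : y ∈ comp G S v) :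
    Conn G (comp G S v) x y := by
  have hvx := (mem_comp.1 hx).2
  have hvy := (mem_comp.1 hy).2
  obtain ⟨p, hp⟩ := hvx.symm.trans hvy
  refine ⟨p, fun z hz => mem_comp.2 ⟨hp z hz, hvx.trans (conn_of_mem_support p hp hz)⟩⟩

lemma exists_adj_step {S : Finset V} {c w : V} (hcw : Conn G S c w) (hne : c ≠ w) :
    ∃ u, G.Adj c u ∧ Conn G (S.erase c) u w := by
  obtain ⟨p, hp⟩ := hcw
  have hb : p.bypass.IsPath := p.bypass_isPath
  have hbs : ∀ z ∈ p.bypass.support, z ∈ S := fun z hz => hp z (p.support_bypass_subset hz)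
  cases hq : p.bypass with
  | nil => exact absurd rfl hne
  | cons hadj q' =>
    rw [hq] at hb hbs
    rw [Walk.cons_isPath_iff] at hb
    refine ⟨_, hadj, q', fun z hz => Finset.mem_erase.2 ⟨?_, hbs z (by simp [hz])⟩⟩
    rintro rfl; exact hb.2 hz

/-- **Centroid lemma**: a connected set `C` in a tree has a vertex whose removal leaves
components of size at most `C.card / 2`. -/
lemma centroid (hG : G.IsTree) {C : Finset V} {v : V} (hv : v ∈ C)
    (hconn : ∀ x ∈ C, ∀ y ∈ C, Conn G C x y) :
    ∃ c ∈ C, ∀ w ∈ C.erase c, (comp G (C.erase c) w).card ≤ C.card / 2 := by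
  obtain ⟨c, hc, hmin⟩ := C.exists_min_image
    (fun a => (C.erase a).sup fun w => (comp G (C.erase a) w).card) ⟨v, hv⟩
  refine ⟨c, hc, fun w hw => ?_⟩
  by_contra hbig
  push_neg at hbig
  set D := comp G (C.erase c) w with hD
  have hwD : w ∈ D := mem_comp_self hw
  have hDsub : D ⊆ C.erase c := comp_subset
  have hDC : D ⊆ C := hDsub.trans (Finset.erase_subset _ _)
  have h2 : C.card < 2 * D.card := by
    have := Finset.card_le_card hDC
    omega
  have hcw : c ≠ w := fun h => by subst h; exact (Finset.mem_erase.1 hw).1 rfl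
  obtain ⟨u, hadj, huw⟩ := exists_adj_step (hconn c hc w (Finset.mem_of_mem_erase hw)) hcw
  have huC' : u ∈ C.erase c := huw.mem_left
  have huD : u ∈ D := mem_comp.2 ⟨huC', huw.symm⟩
  have huC : u ∈ C := Finset.mem_of_mem_erase huC'
  have hfu : ((C.erase u).sup fun x => (comp G (C.erase u) x).card) < D.card := by
    rw [Finset.sup_lt_iff (by simpa using Finset.card_pos.2 ⟨w, hwD⟩)]
    intro x hx
    set E := comp G (C.erase u) x with hE
    have hEsub : E ⊆ C.erase u := comp_subset
    by_cases hcE : Conn G (C.erase u) x c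
    · -- `c ∈ E`; then `E` is disjoint from `D` by uniqueness of paths in the tree
      have hdisj : ∀ y ∈ E, y ∉ D := by
        intro y hyE hyD
        obtain ⟨p1, hp1⟩ := hcE.symm.trans (mem_comp.1 hyE).2
        obtain ⟨p2, hp2⟩ := huw.trans (mem_comp.1 hyD).2
        obtain ⟨π, _, huniq⟩ := hG.existsUnique_path c y
        have hu_not : u ∉ π.support := by
          rw [← huniq p1.bypass p1.bypass_isPath]
          intro h
          exact (Finset.mem_erase.1 (hp1 u (p1.support_bypass_subset h))).1 rfl
        have hcnot : c ∉ p2.bypass.support := fun h =>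
          (Finset.mem_erase.1 (hp2 c (p2.support_bypass_subset h))).1 rfl
        have e2 : SimpleGraph.Walk.cons hadj p2.bypass = π :=
          huniq _ ((Walk.cons_isPath_iff _ _).2 ⟨p2.bypass_isPath, hcnot⟩)
        exact hu_not (by rw [← e2]; simp)
      have hsub : E ⊆ C \ D := fun y hy =>
        Finset.mem_sdiff.2 ⟨Finset.mem_of_mem_erase (hEsub hy), hdisj y hy⟩
      have := Finset.card_le_card hsub
      rw [Finset.card_sdiff_of_subset hDC] at this
      have := Finset.card_le_card hDC
      omega
    · -- `c ∉ E`: walks within `E` avoid `c`, so `E` lies in a component of `C.erase c`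
      have hEsub' : ∀ y ∈ E, Conn G (C.erase c) x y := by
        intro y hyE
        obtain ⟨p, hp⟩ := (mem_comp.1 hyE).2
        have hcp : c ∉ p.support := fun h => hcE (conn_of_mem_support p hp h)
        refine ⟨p, fun z hz => Finset.mem_erase.2 ⟨fun h => hcp (h ▸ hz), ?_⟩⟩
        exact Finset.mem_of_mem_erase (hp z hz)
      by_cases huE : Conn G (C.erase c) x u
      · -- `E` sits inside `D` and misses `u`
        have hED : E ⊆ D := by
          intro y hyE
          exact mem_comp.2 ⟨(hEsub' y hyE).mem_right,
            huw.symm.trans (huE.symm.trans (hEsub' y hyE))⟩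
        have hssub : E ⊂ D := (Finset.ssubset_iff_of_subset hED).2
          ⟨u, huD, fun h => (Finset.mem_erase.1 (hEsub h)).1 rfl⟩
        exact Finset.card_lt_card hssub
      · -- `E` sits in a component of `C.erase c` disjoint from `D`
        have hdisj : ∀ y ∈ E, y ∉ D := by
          intro y hyE hyD
          exact huE ((hEsub' y hyE).trans ((mem_comp.1 hyD).2.symm.trans huw.symm))
        have hsub : E ⊆ C \ D := fun y hy =>
          Finset.mem_sdiff.2 ⟨Finset.mem_of_mem_erase (hEsub hy), hdisj y hy⟩
        have := Finset.card_le_card hsub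
        rw [Finset.card_sdiff_of_subset hDC] at this
        omega
  have hle : D.card ≤ (C.erase c).sup fun x => (comp G (C.erase c) x).card :=
    Finset.le_sup (f := fun x => (comp G (C.erase c) x).card) hw
  exact absurd (hmin u huC) (by simp only [not_le]; exact lt_of_lt_of_le hfu hle)

/-- Main induction: if every component within `S` has at most `n` vertices, there is a
ranking of `S` with labels in `[1, log₂ n + 1]`. -/
lemma main [Nonempty V] (hG : G.IsTree) : ∀ n (S : Finset V), (∀ v ∈ S, (comp G S v).card ≤ n) →
    ∃ ell : V → ℕ, (∀ v ∈ S, 1 ≤ ell v ∧ ell v ≤ Nat.log 2 n + 1) ∧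
      ∀ u v, u ≠ v → ell u = ell v → u ∈ S →
        ∀ p : G.Walk u v, (∀ z ∈ p.support, z ∈ S) → ∃ z ∈ p.support, ell z < ell u := by
  intro n
  induction n using Nat.strong_induction_on with
  | _ n ih =>
  intro S hS
  rcases Nat.eq_zero_or_pos n with h0 | hpos
  · have hempty : ∀ v, v ∉ S := by
      intro v hv
      have h1 := hS v hv
      have h2 : 0 < (comp G S v).card := Finset.card_pos.2 ⟨v, mem_comp_self hv⟩
      omega
    exact ⟨fun _ => 1, fun v hv => absurd hv (hempty v),
      fun u v _ _ hu => absurd hu (hempty u)⟩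
  · have hcent : ∀ C : Finset V, (∃ v ∈ S, comp G S v = C) →
        ∃ c ∈ C, ∀ w ∈ C.erase c, (comp G (C.erase c) w).card ≤ C.card / 2 := by
      rintro C ⟨v, hv, rfl⟩
      exact centroid hG (mem_comp_self hv) (fun x hx y hy => conn_comp_of hx hy)
    choose! cent hcent1 hcent2 using hcent
    set S' := S.filter (fun v => v ≠ cent (comp G S v)) with hS'def
    have hS'S : S' ⊆ S := Finset.filter_subset _ _
    -- components inside `S'` are exactly the components after deleting the centroid
    have hcompS' : ∀ w ∈ S', comp G S' w =
        comp G ((comp G S w).erase (cent (comp G S w))) w := by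
      intro w hw
      have hwS : w ∈ S := hS'S hw
      ext y
      simp only [mem_comp]
      constructor
      · rintro ⟨hy, p, hp⟩
        have hmem : ∀ z ∈ p.support, z ∈ (comp G S w).erase (cent (comp G S w)) := by
          intro z hz
          have hzS' : z ∈ S' := hp z hz
          have hzS : z ∈ S := hS'S hzS'
          have hconnz : Conn G S w z :=
            (conn_of_mem_support p hp hz).mono hS'S
          have hcc : comp G S z = comp G S w := (comp_eq_of_conn hconnz).symm
          refine Finset.mem_erase.2 ⟨?_, mem_comp.2 ⟨hzS, hconnz⟩⟩
          have := (Finset.mem_filter.1 hzS').2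
          rwa [hcc] at this
        exact ⟨hmem y p.end_mem_support, ⟨p, hmem⟩⟩
      · rintro ⟨hy, p, hp⟩
        have hmem : ∀ z ∈ p.support, z ∈ S' := by
          intro z hz
          have hzE := hp z hz
          have hzC : z ∈ comp G S w := Finset.mem_of_mem_erase hzE
          have hzS : z ∈ S := comp_subset hzC
          have hcc : comp G S z = comp G S w := (comp_eq_of_conn (mem_comp.1 hzC).2).symm
          refine Finset.mem_filter.2 ⟨hzS, ?_⟩
          rw [hcc]
          exact (Finset.mem_erase.1 hzE).1
        exact ⟨hmem y p.end_mem_support, ⟨p, hmem⟩⟩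
    have hsmall : ∀ w ∈ S', (comp G S' w).card ≤ n / 2 := by
      intro w hw
      have hwS : w ∈ S := hS'S hw
      have hC : ∃ v ∈ S, comp G S v = comp G S w := ⟨w, hwS, rfl⟩
      have hwerase : w ∈ (comp G S w).erase (cent (comp G S w)) :=
        Finset.mem_erase.2 ⟨(Finset.mem_filter.1 hw).2, mem_comp_self hwS⟩
      rw [hcompS' w hw]
      exact le_trans (hcent2 _ hC w hwerase) (Nat.div_le_div_right (hS w hwS))
    obtain ⟨ell', h1', h2'⟩ := ih (n / 2) (Nat.div_lt_self hpos one_lt_two) S' hsmall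
    set ell : V → ℕ := fun z => if z ∈ S' then ell' z + 1 else 1 with hell
    have ellpos : ∀ z ∈ S', ell z = ell' z + 1 := fun z hz => if_pos hz
    have ellneg : ∀ z, z ∉ S' → ell z = 1 := fun z hz => if_neg hz
    refine ⟨ell, ?_, ?_⟩
    · intro v hv
      by_cases hv' : v ∈ S'
      · rw [ellpos v hv']
        have hb := h1' v hv'
        have hn2 : 2 ≤ n := by
          by_contra h
          have h3 := hsmall v hv'
          have h4 : 0 < (comp G S' v).card := Finset.card_pos.2 ⟨v, mem_comp_self hv'⟩
          omega
        have hlog := Nat.log_div_base 2 n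
        have hposl := Nat.log_pos (b := 2) (by norm_num) hn2
        omega
      · rw [ellneg v hv']; omega
    · intro u v hne heq hu p hsupp
      by_cases hu' : u ∈ S'
      · rw [ellpos u hu'] at heq
        have hv' : v ∈ S' := by
          by_contra h
          rw [ellneg v h] at heq
          have := (h1' u hu').1
          omega
        rw [ellpos v hv'] at heq
        by_cases hall : ∀ z ∈ p.support, z ∈ S'
        · obtain ⟨z, hz, hlt⟩ := h2' u v hne (by omega) hu' p hall
          refine ⟨z, hz, ?_⟩
          rw [ellpos z (hall z hz), ellpos u hu']
          omega
        · push_neg at hall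
          obtain ⟨z, hz, hz'⟩ := hall
          refine ⟨z, hz, ?_⟩
          rw [ellneg z hz', ellpos u hu']
          have := (h1' u hu').1
          omega
      · exfalso
        have hv : v ∈ S := hsupp v p.end_mem_support
        have hv' : v ∉ S' := by
          intro h
          rw [ellneg u hu', ellpos v h] at heq
          have := (h1' v h).1
          omega
        have hcuv : comp G S u = comp G S v := comp_eq_of_conn ⟨p, hsupp⟩
        have hu2 : u = cent (comp G S u) := by
          by_contra h; exact hu' (Finset.mem_filter.2 ⟨hu, h⟩)
        have hv2 : v = cent (comp G S v) := by
          by_contra h; exact hv' (Finset.mem_filter.2 ⟨hv, h⟩)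
        exact hne (by rw [hu2, hcuv, ← hv2])

end Stmt8Aux

/-- Every tree on `m ≥ 1` vertices has a labeling
`ℓ : V → {1, …, ⌊log₂ m⌋ + 1}` such that any two distinct equally-labeled vertices have a
vertex of strictly smaller label on the (unique) path between them. -/
theorem stmt8 {V : Type} [Fintype V] [Nonempty V] (G : SimpleGraph V) (hG : G.IsTree) :
    ∃ ell : V → ℕ,
      (∀ v, 1 ≤ ell v ∧ ell v ≤ Nat.log 2 (Fintype.card V) + 1) ∧
      (∀ u v, u ≠ v → ell u = ell v →
        ∀ p : G.Walk u v, p.IsPath → ∃ z ∈ p.support, ell z < ell u) := by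
  obtain ⟨ell, h1, h2⟩ := Stmt8Aux.main hG (Fintype.card V) Finset.univ
    (fun v _ => by
      simpa [Finset.card_univ] using Finset.card_le_card (Stmt8Aux.comp_subset
        (G := G) (S := Finset.univ) (x := v)))
  exact ⟨ell, fun v => h1 v (Finset.mem_univ v),
    fun u v hne heq p _ => h2 u v hne heq (Finset.mem_univ u) p
      (fun z _ => Finset.mem_univ z)⟩
end
end

section
/- Let T be a tree and ℓ : V → ℕ a labeling such that for any two distinct vertices u, v with ℓ(u) = ℓ(v), either every vertex on the u–v path in T has label equal to ℓ(u), or some vertex on the u–v path has label strictly smaller than ℓ(u). Then for every connected subgraph T″ of T, the set of vertices of T″ whose label equals the minimum of ℓ over V(T″) induces a connected subgraph of T″. -/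
open scoped Classical
noncomputable section

private lemma reach_of_walk' {V : Type} {G : SimpleGraph V} {s : Set V} :
    ∀ {u v : V} (p : G.Walk u v), (∀ z ∈ p.support, z ∈ s) →
      ∀ (hu : u ∈ s) (hv : v ∈ s), (G.induce s).Reachable ⟨u, hu⟩ ⟨v, hv⟩ := by
  intro u v p
  induction p with
  | nil => intro _ hu hv; rfl
  | cons h p ih =>
    rename_i a b c
    intro hsupp hu hv
    have hb : b ∈ s := hsupp b (by simp)
    refine (SimpleGraph.Adj.reachable ?_).trans (ih (fun z hz => hsupp z (by simp [hz])) hb hv)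
    exact h

private lemma walk_of_induce' {V : Type} {G : SimpleGraph V} {s : Set V} :
    ∀ {a b : s} (p : (G.induce s).Walk a b),
      ∃ q : G.Walk a.1 b.1, ∀ z ∈ q.support, z ∈ s := by
  intro a b p
  induction p with
  | nil =>
    rename_i u
    exact ⟨.nil, by rintro z hz; simp at hz; subst hz; exact u.2⟩
  | cons h p ih =>
    rename_i x y c
    obtain ⟨q, hq⟩ := ih
    exact ⟨.cons h q, by
      rintro z hz; have hz : z = x.1 ∨ z ∈ q.support := List.mem_cons.mp hz
      rcases hz with rfl | hz
      · exact x.2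
      · exact hq z hz⟩

/-- If a labeling of a tree is such that for any two distinct equally-labeled
vertices the path between them either consists entirely of vertices of that label or contains a
vertex of strictly smaller label, then in every nonempty connected subgraph the vertices
attaining the minimum label induce a connected subgraph. -/
theorem stmt9 {V : Type} [Fintype V] (G : SimpleGraph V) (hG : G.IsTree)
    (ell : V → ℕ)
    (hell : ∀ u v, u ≠ v → ell u = ell v → ∀ p : G.Walk u v, p.IsPath →
      (∀ z ∈ p.support, ell z = ell u) ∨ (∃ z ∈ p.support, ell z < ell u))
    (S : Set V) (hS : S.Nonempty) (hconn : (G.induce S).Connected) :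
    (G.induce {v | v ∈ S ∧ ell v = sInf (ell '' S)}).Connected := by
  have himg : (ell '' S).Nonempty := hS.image ell
  obtain ⟨v0, hv0S, hv0m⟩ := Nat.sInf_mem himg
  have hne : Nonempty {v | v ∈ S ∧ ell v = sInf (ell '' S)} := ⟨⟨v0, hv0S, hv0m⟩⟩
  refine ⟨fun a b => ?_⟩
  obtain ⟨u, hu⟩ := a
  obtain ⟨v, hv⟩ := b
  by_cases huv : u = v
  · subst huv
    exact SimpleGraph.Reachable.refl _
  · obtain ⟨w⟩ := hconn.preconnected ⟨u, hu.1⟩ ⟨v, hv.1⟩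
    obtain ⟨q, hq⟩ := walk_of_induce' w
    have hps : ∀ z ∈ (q.toPath : G.Walk u v).support, z ∈ S :=
      fun z hz => hq z (SimpleGraph.Walk.support_toPath_subset q hz)
    rcases hell u v huv (hu.2.trans hv.2.symm) q.toPath q.toPath.2 with hall | ⟨z, hz, hlt⟩
    · exact reach_of_walk' (q.toPath : G.Walk u v)
        (fun z hz => show z ∈ S ∧ ell z = sInf (ell '' S) from
          ⟨hps z hz, by rw [hall z hz, hu.2]⟩) hu hv
    · have hle : sInf (ell '' S) ≤ ell z := Nat.sInf_le ⟨z, hps z hz, rfl⟩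
      have : ell u = sInf (ell '' S) := hu.2
      omega
end
end

section
/- Let T be a tree rooted at r and ℓ : V → ℕ a labeling such that for any two distinct vertices u, v with ℓ(u) = ℓ(v), either every vertex on the u–v path in T has label equal to ℓ(u), or some vertex on the u–v path has label strictly smaller than ℓ(u). For a vertex v, let R(v) be the set of vertices u of the subtree T_v rooted at v such that ℓ(u) < ℓ(v) and every internal vertex z of the v–u path satisfies ℓ(z) > ℓ(u). Then any two distinct vertices u₁, u₂ ∈ R(v) satisfy ℓ(u₁) ≠ ℓ(u₂). -/
open scoped Classical
noncomputable section

/-- Let `T` be a tree rooted at `r` with a labeling such that for any two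
distinct equally-labeled vertices the path between them either consists entirely of vertices of
that label or contains a vertex of strictly smaller label. If `u₁, u₂` are distinct vertices of
`R(v)` — i.e. vertices `u` of the subtree rooted at `v` (every path from `r` to `u` passes
through `v`) with `ℓ(u) < ℓ(v)` such that every internal vertex `z` of the `v`–`u` path has
`ℓ(z) > ℓ(u)` — then `ℓ(u₁) ≠ ℓ(u₂)`. -/
theorem stmt10 {V : Type} [Fintype V] (G : SimpleGraph V) (hG : G.IsTree) (r : V)
    (ell : V → ℕ)
    (hell : ∀ u v, u ≠ v → ell u = ell v → ∀ p : G.Walk u v, p.IsPath →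
      (∀ z ∈ p.support, ell z = ell u) ∨ (∃ z ∈ p.support, ell z < ell u))
    (v u₁ u₂ : V)
    (h₁ : ell u₁ < ell v ∧
      (∀ p : G.Walk r u₁, p.IsPath → v ∈ p.support) ∧
      (∀ p : G.Walk v u₁, p.IsPath → ∀ z ∈ p.support, z ≠ v → z ≠ u₁ → ell u₁ < ell z))
    (h₂ : ell u₂ < ell v ∧
      (∀ p : G.Walk r u₂, p.IsPath → v ∈ p.support) ∧
      (∀ p : G.Walk v u₂, p.IsPath → ∀ z ∈ p.support, z ≠ v → z ≠ u₂ → ell u₂ < ell z))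
    (hne : u₁ ≠ u₂) :
    ell u₁ ≠ ell u₂ := by
  intro heq
  obtain ⟨h1lt, -, h1int⟩ := h₁
  obtain ⟨h2lt, -, h2int⟩ := h₂
  obtain ⟨w₁⟩ := hG.isConnected.preconnected v u₁
  obtain ⟨w₂⟩ := hG.isConnected.preconnected v u₂
  have hp₁ : w₁.bypass.IsPath := w₁.bypass_isPath
  have hp₂ : w₂.bypass.IsPath := w₂.bypass_isPath
  set p₁ := w₁.bypass
  set p₂ := w₂.bypass
  -- membership splitter
  have hmem : ∀ z ∈ (p₁.reverse.append p₂).bypass.support,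
      z ∈ p₁.support ∨ z ∈ p₂.support := by
    intro z hz
    have hz' := SimpleGraph.Walk.support_bypass_subset _ hz
    rw [SimpleGraph.Walk.support_append, List.mem_append,
      SimpleGraph.Walk.support_reverse, List.mem_reverse] at hz'
    exact hz'.imp id (fun h => List.tail_subset _ h)
  have hvne₁ : u₁ ≠ v := by intro h; rw [h] at h1lt; omega
  have hvne₂ : u₂ ≠ v := by intro h; rw [h] at h2lt; omega
  have hu₂p₁ : u₂ ∉ p₁.support := by
    intro h
    have := h1int p₁ hp₁ u₂ h hvne₂ (Ne.symm hne)
    omega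
  have hP : (p₁.reverse.append p₂).bypass.IsPath := (p₁.reverse.append p₂).bypass_isPath
  rcases hell u₁ u₂ hne heq _ hP with hall | ⟨z, hz, hzlt⟩
  · -- all labels on the u₁–u₂ path equal ell u₁
    cases hPc : (p₁.reverse.append p₂).bypass with
    | nil => exact hne rfl
    | @cons _ z _ hadj q =>
      have hzsup : z ∈ (p₁.reverse.append p₂).bypass.support := by
        rw [hPc]; simp [SimpleGraph.Walk.support_cons]
      have hzell : ell z = ell u₁ := hall z hzsup
      have hzv : z ≠ v := by intro h; rw [h] at hzell; omega
      have hzu₁ : z ≠ u₁ := by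
        have := hP
        rw [hPc, SimpleGraph.Walk.cons_isPath_iff] at this
        intro h; exact this.2 (h ▸ q.start_mem_support)
      rcases hmem z hzsup with hzp | hzp
      · have := h1int p₁ hp₁ z hzp hzv hzu₁
        omega
      · by_cases hzu₂ : z = u₂
        · -- u₁ adjacent to u₂; extend p₁ by this edge
          subst hzu₂
          have hW : (p₁.concat hadj).IsPath := by
            rw [← SimpleGraph.Walk.isPath_reverse_iff, SimpleGraph.Walk.reverse_concat,
              SimpleGraph.Walk.cons_isPath_iff]
            refine ⟨(SimpleGraph.Walk.isPath_reverse_iff _).2 hp₁, ?_⟩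
            rw [SimpleGraph.Walk.support_reverse, List.mem_reverse]
            exact hu₂p₁
          have hu₁mem : u₁ ∈ (p₁.concat hadj).support := by
            rw [SimpleGraph.Walk.support_concat, List.mem_append]
            exact Or.inl p₁.end_mem_support
          have := h2int (p₁.concat hadj) hW u₁ hu₁mem hvne₁ hne
          omega
        · have := h2int p₂ hp₂ z hzp hzv hzu₂
          omega
  · -- some label on the path is strictly smaller
    have hzu₁ : z ≠ u₁ := by intro h; rw [h] at hzlt; omega
    have hzu₂ : z ≠ u₂ := by intro h; rw [h, heq] at hzlt; omega
    have hzv : z ≠ v := by intro h; rw [h] at hzlt; omega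
    rcases hmem z hz with hzp | hzp
    · have := h1int p₁ hp₁ z hzp hzv hzu₁; omega
    · have := h2int p₂ hp₂ z hzp hzv hzu₂; rw [heq] at hzlt; omega
end
end

section
/- Let T be a node-weighted tree, let T* be a nonempty subtree (connected subgraph) of T with vertex set V*, let A* be a search strategy for T* (with the inherited weights), and for each connected component T′ of T ∖ V* let R_{T′} be a search strategy for T′. Then there exists a search strategy R for T with COST_R(T) ≤ COST_{A*}(T*) + max_{v ∈ V*} w(v) + max_{T′ ∈ C(T ∖ V*)} COST_{R_{T′}}(T′), where C(T ∖ V*) is the set of connected components of T ∖ V* and the last maximum is taken as 0 if T ∖ V* is empty. -/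
open scoped Classical
noncomputable section

namespace Aux
open SimpleGraph Walk
variable {V : Type} {G : SimpleGraph V}

@[simp] lemma run_guess (G : SimpleGraph V) (y x : V) : (Strategy.guess y).run G x = y := rfl
@[simp] lemma run_ask (G : SimpleGraph V) (v : V) (next : V → Strategy V) (x : V) :
    (Strategy.ask v next).run G x = if x = v then v else (next (stepTo G v x)).run G x := rfl
@[simp] lemma cost_guess (G : SimpleGraph V) (w : V → ℝ) (y x : V) :
    (Strategy.guess y).cost G w x = 0 := rfl
@[simp] lemma cost_ask (G : SimpleGraph V) (w : V → ℝ) (v : V) (next : V → Strategy V) (x : V) :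
    (Strategy.ask v next).cost G w x
      = if x = v then w v else w v + (next (stepTo G v x)).cost G w x := rfl

lemma cost_nonneg (G : SimpleGraph V) (w : V → ℝ) (hw : ∀ v, 0 ≤ w v)
    (A : Strategy V) (x : V) : 0 ≤ A.cost G w x := by
  induction A with
  | guess y => simp
  | ask v next ih =>
    simp only [cost_ask]
    split
    · exact hw v
    · exact add_nonneg (hw v) (ih _)

lemma path_eq (hG : G.IsTree) {a b : V} {p q : G.Walk a b} (hp : p.IsPath) (hq : q.IsPath) :
    p = q := (hG.existsUnique_path a b).unique hp hq

lemma path_length (hG : G.IsTree) {a b : V} {p : G.Walk a b} (hp : p.IsPath) :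
    p.length = G.dist a b := by
  obtain ⟨q, hq, hl⟩ := hG.isConnected.exists_path_of_dist a b
  rw [path_eq hG hp hq, hl]

lemma exists_step {W : Type} {H : SimpleGraph W} (hc : H.Connected) {v x : W} (h : v ≠ x) :
    ∃ u, H.Adj v u ∧ H.dist x u < H.dist x v := by
  obtain ⟨p, hp, hl⟩ := hc.exists_path_of_dist v x
  cases p with
  | nil => exact absurd rfl h
  | @cons _ b _ hadj q =>
    refine ⟨b, hadj, ?_⟩
    have h1 : H.dist x b ≤ q.length := by rw [SimpleGraph.dist_comm]; exact SimpleGraph.dist_le q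
    have h2 : H.dist x v = q.length + 1 := by
      rw [SimpleGraph.dist_comm, ← hl]; simp [SimpleGraph.Walk.length_cons]
    omega

lemma step_second (hG : G.IsTree) {v x : V} (hvx : v ≠ x) {u : V} (hadj : G.Adj v u)
    (hd : G.dist x u < G.dist x v) (P : G.Walk v x) (hP : P.IsPath) :
    u = P.getVert 1 := by
  obtain ⟨r, hr, hrl⟩ := hG.isConnected.exists_path_of_dist u x
  have hvr : v ∉ r.support := by
    intro hv
    have h1 : G.dist v x ≤ (r.dropUntil v hv).length := SimpleGraph.dist_le _
    have h2 := SimpleGraph.Walk.length_dropUntil_le r hv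
    rw [hrl] at h2
    rw [SimpleGraph.dist_comm (u := x) (v := u), SimpleGraph.dist_comm (u := x) (v := v)] at hd
    omega
  have hcons : (SimpleGraph.Walk.cons hadj r).IsPath := hr.cons hvr
  rw [← path_eq hG hcons hP]
  simp [SimpleGraph.Walk.getVert_cons_succ, SimpleGraph.Walk.getVert_zero]

lemma step_eq (hG : G.IsTree) {v x u : V} (hadj : G.Adj v u) (hd : G.dist x u < G.dist x v) :
    stepTo G v x = u := by
  have hvx : v ≠ x := by rintro rfl; simp [SimpleGraph.dist_self] at hd
  obtain ⟨P, hP, -⟩ := hG.isConnected.exists_path_of_dist v x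
  have hex : ∃ u', G.Adj v u' ∧ G.dist x u' < G.dist x v := ⟨u, hadj, hd⟩
  rw [stepTo, dif_pos hex]
  exact (step_second hG hvx hex.choose_spec.1 hex.choose_spec.2 P hP).trans
    (step_second hG hvx hadj hd P hP).symm

lemma stepTo_adj (hG : G.IsTree) {v x : V} (hvx : v ≠ x) :
    G.Adj v (stepTo G v x) ∧ G.dist x (stepTo G v x) + 1 = G.dist x v := by
  have hex := exists_step hG.isConnected hvx
  rw [stepTo, dif_pos hex]
  obtain ⟨h1, h2⟩ := hex.choose_spec
  refine ⟨h1, ?_⟩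
  have h3 : G.dist x v ≤ G.dist x hex.choose + G.dist hex.choose v :=
    hG.isConnected.dist_triangle
  have h4 : G.dist hex.choose v = 1 := SimpleGraph.dist_eq_one_iff_adj.mpr h1.symm
  omega

lemma getVert_one_prefix {W : Type} {H : SimpleGraph W} {a b c : W}
    (p : H.Walk a b) (q : H.Walk b c) (hp : p.length ≠ 0) :
    (p.append q).getVert 1 = p.getVert 1 := by
  rw [SimpleGraph.Walk.getVert_append]
  by_cases h : 1 < p.length
  · rw [if_pos h]
  · have h1 : p.length = 1 := by omega
    rw [if_neg h, h1]
    have h2 : p.getVert 1 = b := by rw [← h1]; exact SimpleGraph.Walk.getVert_length p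
    simp [SimpleGraph.Walk.getVert_zero, h2]

lemma step_agree (hG : G.IsTree) {v x g : V} (hvx : v ≠ x) (hvg : v ≠ g)
    (hle : G.dist x g ≤ G.dist x v) : stepTo G v x = stepTo G v g := by
  obtain ⟨P, hP, hPl⟩ := hG.isConnected.exists_path_of_dist v x
  obtain ⟨Q, hQ, hQl⟩ := hG.isConnected.exists_path_of_dist v g
  by_cases hshare : ∃ z, z ≠ v ∧ z ∈ P.support ∧ z ∈ Q.support
  · obtain ⟨z, hzv, hzP, hzQ⟩ := hshare
    have hPt : (P.takeUntil z hzP).IsPath := hP.takeUntil hzP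
    have hQt : (Q.takeUntil z hzQ).IsPath := hQ.takeUntil hzQ
    have heq : P.takeUntil z hzP = Q.takeUntil z hzQ := path_eq hG hPt hQt
    have htl : (P.takeUntil z hzP).length ≠ 0 := by
      intro h0
      exact hzv (SimpleGraph.Walk.eq_of_length_eq_zero h0).symm
    have htl' : (Q.takeUntil z hzQ).length ≠ 0 := by rw [← heq]; exact htl
    have hP1 : P.getVert 1 = (P.takeUntil z hzP).getVert 1 := by
      conv_lhs => rw [← SimpleGraph.Walk.take_spec P hzP]
      rw [getVert_one_prefix _ _ htl]
    have hQ1 : Q.getVert 1 = (Q.takeUntil z hzQ).getVert 1 := by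
      conv_lhs => rw [← SimpleGraph.Walk.take_spec Q hzQ]
      rw [getVert_one_prefix _ _ htl']
    have hsx : stepTo G v x = P.getVert 1 := by
      obtain ⟨ha, hd⟩ := stepTo_adj hG hvx
      exact step_second hG hvx ha (by omega) P hP
    have hsg : stepTo G v g = Q.getVert 1 := by
      obtain ⟨ha, hd⟩ := stepTo_adj hG hvg
      exact step_second hG hvg ha (by omega) Q hQ
    rw [hsx, hsg, hP1, hQ1, heq]
  · exfalso
    push_neg at hshare
    have hpath : (P.reverse.append Q).IsPath := by
      rw [SimpleGraph.Walk.isPath_def, SimpleGraph.Walk.support_append]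
      apply List.Nodup.append
      · rw [SimpleGraph.Walk.support_reverse]
        exact List.nodup_reverse.mpr hP.support_nodup
      · have := hQ.support_nodup
        rw [SimpleGraph.Walk.support_eq_cons] at this
        exact this.of_cons
      · intro z hz1 hz2
        have hzP : z ∈ P.support := by
          rw [SimpleGraph.Walk.support_reverse] at hz1
          exact List.mem_reverse.mp hz1
        have hzvne : z ≠ v := by
          rintro rfl
          have := hQ.support_nodup
          rw [SimpleGraph.Walk.support_eq_cons] at this
          exact (List.nodup_cons.mp this).1 hz2
        have hzQ : z ∈ Q.support := by
          rw [SimpleGraph.Walk.support_eq_cons]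
          exact List.mem_cons_of_mem _ hz2
        exact hshare z hzvne hzP hzQ
    have hlen := path_length hG hpath
    rw [SimpleGraph.Walk.length_append, SimpleGraph.Walk.length_reverse, hPl, hQl] at hlen
    have hvg' : G.dist v g ≠ 0 :=
      SimpleGraph.dist_ne_zero_iff_ne_and_reachable.mpr ⟨hvg, hG.isConnected v g⟩
    rw [SimpleGraph.dist_comm (u := v) (v := x)] at hlen
    omega
lemma dist_induce (hG : G.IsTree) {K : Set V} (hK : (G.induce K).Connected) (a b : ↥K) :
    (G.induce K).dist a b = G.dist a.val b.val := by
  obtain ⟨p, hp, hl⟩ := hK.exists_path_of_dist a b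
  have hinj : Function.Injective ((SimpleGraph.Embedding.induce K : G.induce K ↪g G)).toHom :=
    fun y z h => Subtype.ext h
  have hmp : (p.map (SimpleGraph.Embedding.induce K : G.induce K ↪g G).toHom).IsPath :=
    p.map_isPath_of_injective hinj hp
  have := path_length hG hmp
  rw [SimpleGraph.Walk.length_map] at this
  rw [← hl, this]; rfl

lemma stepTo_induce (hG : G.IsTree) {K : Set V} (hK : (G.induce K).Connected)
    {a b : ↥K} (hab : a ≠ b) :
    stepTo G a.val b.val ∈ K ∧
      ((stepTo (G.induce K) a b : ↥K) : V) = stepTo G a.val b.val := by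
  have hex := exists_step hK hab
  have hu := hex.choose_spec
  have hstep : stepTo (G.induce K) a b = hex.choose := by rw [stepTo, dif_pos hex]
  have hadj : G.Adj a.val hex.choose.val := hu.1
  have hd : G.dist b.val hex.choose.val < G.dist b.val a.val := by
    rw [← dist_induce hG hK b hex.choose, ← dist_induce hG hK b a]; exact hu.2
  have heq : stepTo G a.val b.val = hex.choose.val := step_eq hG hadj hd
  refine ⟨?_, by rw [hstep, heq]⟩
  rw [heq]; exact hex.choose.2

lemma reach_compl (hG : G.IsTree) {S : Set V} :
    ∀ (n : ℕ) (x y : V) (hx : x ∈ Sᶜ) (hy : y ∈ Sᶜ), G.dist x y = n →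
      (∀ z, G.dist x z + G.dist z y = n → z ∈ Sᶜ) →
      (G.induce Sᶜ).Reachable ⟨x, hx⟩ ⟨y, hy⟩ := by
  intro n
  induction n with
  | zero =>
    intro x y hx hy hd _
    have hxy : x = y := hG.isConnected.dist_eq_zero_iff.mp hd
    subst hxy
    exact SimpleGraph.Reachable.refl _
  | succ n ihn =>
    intro x y hx hy hd hall
    have hyx : y ≠ x := by rintro rfl; rw [SimpleGraph.dist_self] at hd; omega
    obtain ⟨hadj, hdd⟩ := stepTo_adj hG hyx
    set z := stepTo G y x with hzdef
    have hz1 : G.dist x z = n := by omega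
    have hzy : G.dist z y = 1 := SimpleGraph.dist_eq_one_iff_adj.mpr hadj.symm
    have hzS : z ∈ Sᶜ := hall z (by omega)
    have hstep : (G.induce Sᶜ).Adj ⟨z, hzS⟩ ⟨y, hy⟩ := hadj.symm
    have hreach := ihn x z hx hzS hz1 (fun t ht => hall t (by
      have h1 : G.dist t y ≤ G.dist t z + G.dist z y := hG.isConnected.dist_triangle
      have h2 : G.dist x y ≤ G.dist x t + G.dist t y := hG.isConnected.dist_triangle
      omega))
    exact hreach.trans hstep.reachable

lemma walk_transfer {S : Set V} {c : (G.induce Sᶜ).ConnectedComponent} :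
    ∀ {a b : ↥(Sᶜ)} (_ : (G.induce Sᶜ).Walk a b) (ha : a ∈ c.supp) (hb : b ∈ c.supp),
      (G.induce (Subtype.val '' c.supp)).Reachable ⟨a.val, ⟨a, ha, rfl⟩⟩ ⟨b.val, ⟨b, hb, rfl⟩⟩ := by
  intro a b W
  induction W with
  | nil => intro ha hb; exact SimpleGraph.Reachable.refl _
  | @cons u u' b' h W ih =>
    intro ha hb
    have hu' : u' ∈ c.supp := by
      rw [SimpleGraph.ConnectedComponent.mem_supp_iff] at ha ⊢
      rw [← ha]
      exact (SimpleGraph.ConnectedComponent.sound h.reachable).symm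
    have hadj : (G.induce (Subtype.val '' c.supp)).Adj ⟨u.val, ⟨u, ha, rfl⟩⟩ ⟨u'.val, ⟨u', hu', rfl⟩⟩ := h
    exact hadj.reachable.trans (ih hu' hb)

lemma comp_supp_connected {S : Set V} (c : (G.induce Sᶜ).ConnectedComponent) :
    (G.induce (Subtype.val '' c.supp)).Connected := by
  obtain ⟨a, ha⟩ := c.exists_rep
  have haS : a ∈ c.supp := by rw [SimpleGraph.ConnectedComponent.mem_supp_iff]; exact ha
  rw [SimpleGraph.connected_iff]
  refine ⟨?_, ⟨⟨a.val, ⟨a, haS, rfl⟩⟩⟩⟩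
  rintro ⟨p, hp⟩ ⟨q, hq⟩
  obtain ⟨ap, hap, rfl⟩ := hp
  obtain ⟨aq, haq, rfl⟩ := hq
  have hr : (G.induce Sᶜ).Reachable ap aq := by
    rw [SimpleGraph.ConnectedComponent.mem_supp_iff] at hap haq
    exact SimpleGraph.ConnectedComponent.exact (hap.trans haq.symm)
  obtain ⟨W⟩ := hr
  exact walk_transfer W hap haq
end Aux

/-- Lift a strategy on an induced subgraph to the whole graph (junk outside). -/
noncomputable def liftStrat {V : Type} (K : Set V) : Strategy ↥K → Strategy V
  | .guess y => .guess y.val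
  | .ask v next => .ask v.val
      (fun u => if h : u ∈ K then liftStrat K (next ⟨u, h⟩) else .guess u)

/-- Lift a strategy on the subtree `S`, then hand off to `comp` when leaving `S`. -/
noncomputable def liftA {V : Type} (S : Set V) (comp : V → Strategy V) :
    Strategy ↥S → Strategy V
  | .guess y => .ask y.val comp
  | .ask v next => .ask v.val
      (fun u => if h : u ∈ S then liftA S comp (next ⟨u, h⟩) else comp u)

namespace Aux

lemma liftStrat_spec {G : SimpleGraph V} (hG : G.IsTree)
    (w : V → ℝ) {K : Set V} (hK : (G.induce K).Connected)
    (B : Strategy ↥K) {x : V} (hx : x ∈ K) :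
    (liftStrat K B).run G x = ((B.run (G.induce K) ⟨x, hx⟩ : ↥K) : V) ∧
      (liftStrat K B).cost G w x = B.cost (G.induce K) (fun v => w ↑v) ⟨x, hx⟩ := by
  induction B with
  | guess y => exact ⟨rfl, rfl⟩
  | ask v next ih =>
    by_cases hxv : x = ↑v
    · have hxv' : (⟨x, hx⟩ : ↥K) = v := Subtype.ext hxv
      constructor
      · simp [liftStrat, run_ask, hxv, hxv']
      · simp [liftStrat, cost_ask, hxv, hxv']
    · have hne : (⟨x, hx⟩ : ↥K) ≠ v := fun h => hxv (congrArg Subtype.val h)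
      have hvK : v ≠ (⟨x, hx⟩ : ↥K) := Ne.symm hne
      have hind := stepTo_induce hG hK hvK
      have hmem : stepTo G (↑v) x ∈ K := hind.1
      have hsv : stepTo (G.induce K) v ⟨x, hx⟩ = ⟨stepTo G (↑v) x, hmem⟩ :=
        Subtype.ext hind.2
      obtain ⟨ih1, ih2⟩ := ih ⟨stepTo G (↑v) x, hmem⟩
      constructor
      · simp only [liftStrat, run_ask, if_neg hxv, if_neg hne, dif_pos hmem, hsv, ih1]
      · simp only [liftStrat, cost_ask, if_neg hxv, if_neg hne, dif_pos hmem, hsv, ih2]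

lemma phase1 {G : SimpleGraph V} (hG : G.IsTree)
    (w : V → ℝ) (hw0 : ∀ v, 0 ≤ w v) [Fintype V]
    (S : Set V) (hconn : (G.induce S).Connected)
    (comp : V → Strategy V) (x g : V) (hgS : g ∈ S)
    (hgmin : ∀ v ∈ S, G.dist x g ≤ G.dist x v)
    (Ccomp : ℝ) (hC0 : 0 ≤ Ccomp)
    (hsup0 : 0 ≤ ⨆ v : ↥S, w ↑v)
    (hcomp : x ∉ S → (comp (stepTo G g x)).run G x = x ∧
      (comp (stepTo G g x)).cost G w x ≤ Ccomp)
    (B : Strategy ↥S) (hrun : B.run (G.induce S) ⟨g, hgS⟩ = ⟨g, hgS⟩) :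
    (liftA S comp B).run G x = x ∧
      (liftA S comp B).cost G w x ≤
        B.cost (G.induce S) (fun v => w ↑v) ⟨g, hgS⟩ + (⨆ v : ↥S, w ↑v) + Ccomp := by
  have hbdd : BddAbove (Set.range fun v : ↥S => w ↑v) := (Set.finite_range _).bddAbove
  have hgx : x ∈ S → g = x := by
    intro hx
    have h0 := hgmin x hx
    rw [SimpleGraph.dist_self] at h0
    have h1 : G.dist x g = 0 := Nat.le_zero.mp h0
    exact (hG.isConnected.dist_eq_zero_iff.mp h1).symm
  induction B with
  | guess y =>
    have hy : y = (⟨g, hgS⟩ : ↥S) := hrun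
    have hyv : (y : V) = g := by rw [hy]
    by_cases hxg : x = g
    · constructor
      · simp [liftA, run_ask, hyv, hxg]
      · have h1 : (liftA S comp (Strategy.guess y)).cost G w x = w g := by
          simp [liftA, cost_ask, hyv, hxg]
        rw [h1]
        have h2 : w g ≤ ⨆ v : ↥S, w ↑v := le_ciSup hbdd (⟨g, hgS⟩ : ↥S)
        simp only [cost_guess]
        linarith
    · have hxS : x ∉ S := fun hx => hxg ((hgx hx).symm)
      obtain ⟨hcr, hcc⟩ := hcomp hxS
      constructor
      · simp only [liftA, run_ask, hyv, if_neg hxg]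
        exact hcr
      · simp only [liftA, cost_ask, hyv, if_neg hxg, cost_guess]
        have h2 : w g ≤ ⨆ v : ↥S, w ↑v := le_ciSup hbdd (⟨g, hgS⟩ : ↥S)
        linarith
  | ask v next ih =>
    by_cases hxv : x = ↑v
    · have hxvS : x ∈ S := hxv ▸ v.2
      have hgv : (⟨g, hgS⟩ : ↥S) = v := Subtype.ext ((hgx hxvS).trans hxv)
      constructor
      · simp [liftA, run_ask, hxv]
      · have h1 : (liftA S comp (Strategy.ask v next)).cost G w x = w ↑v := by
          simp [liftA, cost_ask, hxv]
        have h2 : (Strategy.ask v next).cost (G.induce S) (fun v => w ↑v) ⟨g, hgS⟩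
            = w ↑v := by simp [cost_ask, hgv]
        rw [h1, h2]
        linarith
    · have hvx : (v : V) ≠ x := Ne.symm hxv
      obtain ⟨hadj, hdd⟩ := stepTo_adj hG hvx
      by_cases huS : stepTo G (↑v) x ∈ S
      · have hvg : (v : V) ≠ g := by
          rintro rfl
          have := hgmin _ huS
          omega
        have hstep : stepTo G (↑v) g = stepTo G (↑v) x :=
          (step_agree hG hvx hvg (hgmin (↑v) v.2)).symm
        have hgv : (⟨g, hgS⟩ : ↥S) ≠ v := fun h => hvg (congrArg Subtype.val h).symm
        have hvg' : v ≠ (⟨g, hgS⟩ : ↥S) := Ne.symm hgv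
        have hind := stepTo_induce hG hconn hvg'
        have hsv : stepTo (G.induce S) v ⟨g, hgS⟩ = ⟨stepTo G (↑v) x, huS⟩ :=
          Subtype.ext (by rw [hind.2, hstep])
        have hrun' : (next ⟨stepTo G (↑v) x, huS⟩).run (G.induce S) ⟨g, hgS⟩ = ⟨g, hgS⟩ := by
          have := hrun
          rw [run_ask, if_neg hgv, hsv] at this
          exact this
        obtain ⟨ih1, ih2⟩ := ih ⟨stepTo G (↑v) x, huS⟩ hrun'
        constructor
        · simp only [liftA, run_ask, if_neg hxv, dif_pos huS]
          exact ih1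
        · have h1 : (liftA S comp (Strategy.ask v next)).cost G w x
              = w ↑v + (liftA S comp (next ⟨stepTo G (↑v) x, huS⟩)).cost G w x := by
            simp only [liftA, cost_ask, if_neg hxv, dif_pos huS]
          have h2 : (Strategy.ask v next).cost (G.induce S) (fun v => w ↑v) ⟨g, hgS⟩
              = w ↑v + (next ⟨stepTo G (↑v) x, huS⟩).cost (G.induce S) (fun v => w ↑v)
                  ⟨g, hgS⟩ := by
            rw [cost_ask, if_neg hgv, hsv]
          rw [h1, h2]
          linarith
      · have hvg : (v : V) = g := by
          by_contra hne
          have hagree := step_agree hG hvx hne (hgmin (↑v) v.2)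
          have hgv' : v ≠ (⟨g, hgS⟩ : ↥S) := fun h => hne (congrArg Subtype.val h)
          have hmem := (stepTo_induce hG hconn hgv').1
          rw [← hagree] at hmem
          exact huS hmem
        have hxS : x ∉ S := by
          intro hx
          exact hxv (by rw [← hgx hx, hvg])
        obtain ⟨hcr, hcc⟩ := hcomp hxS
        have hgv : (⟨g, hgS⟩ : ↥S) = v := Subtype.ext hvg.symm
        constructor
        · simp only [liftA, run_ask, if_neg hxv, dif_neg huS]
          rw [hvg]
          exact hcr
        · have h1 : (liftA S comp (Strategy.ask v next)).cost G w x
              = w ↑v + (comp (stepTo G (↑v) x)).cost G w x := by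
            simp only [liftA, cost_ask, if_neg hxv, dif_neg huS]
          have h2 : (Strategy.ask v next).cost (G.induce S) (fun v => w ↑v) ⟨g, hgS⟩
              = w ↑v := by simp [cost_ask, hgv]
          rw [h1, h2, hvg]
          linarith
end Aux

open Aux

/-- Divide and conquer: given a valid search strategy `A*` on a nonempty
subtree `T*` (the induced graph on a connected vertex set `S`) and valid search strategies
`R_{T′}` on every connected component `T′` of `T ∖ S`, there is a valid search strategy `R`
on `T` with
`COST_R(T) ≤ COST_{A*}(T*) + max_{v ∈ S} w(v) + max_{T′} COST_{R_{T′}}(T′)`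
(the last maximum being `0` when `T ∖ S` is empty). -/
theorem stmt11 {V : Type} [Fintype V] (G : SimpleGraph V) (hG : G.IsTree)
    (w : V → ℝ) (hw0 : ∀ v, 0 ≤ w v)
    (S : Set V) (hS : S.Nonempty) (hconn : (G.induce S).Connected)
    (Astar : Strategy ↥S) (hAstar : Astar.IsValid (G.induce S))
    (R : ∀ c : (G.induce Sᶜ).ConnectedComponent, Strategy ↥(Subtype.val '' c.supp))
    (hR : ∀ c : (G.induce Sᶜ).ConnectedComponent,
      (R c).IsValid (G.induce (Subtype.val '' c.supp))) :
    ∃ A : Strategy V, A.IsValid G ∧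
      SearchCost G w A ≤
        SearchCost (G.induce S) (fun v => w v) Astar
        + (⨆ v : ↥S, w v)
        + ⨆ c : (G.induce Sᶜ).ConnectedComponent,
            SearchCost (G.induce (Subtype.val '' c.supp)) (fun v => w v) (R c) := by
  classical
  obtain ⟨s0, hs0⟩ := hS
  have hNV : Nonempty V := ⟨s0⟩
  have hfinC : Finite (G.induce Sᶜ).ConnectedComponent :=
    Finite.of_surjective (G.induce Sᶜ).connectedComponentMk
      (fun c => c.exists_rep)
  set Ccomp : ℝ := ⨆ c : (G.induce Sᶜ).ConnectedComponent,
      SearchCost (G.induce (Subtype.val '' c.supp)) (fun v => w v) (R c) with hCdef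
  have hCost_le : ∀ (c : (G.induce Sᶜ).ConnectedComponent)
      (y : ↥(Subtype.val '' c.supp)),
      (R c).cost (G.induce (Subtype.val '' c.supp)) (fun v => w ↑v) y ≤ Ccomp := by
    intro c y
    have h1 : (R c).cost (G.induce (Subtype.val '' c.supp)) (fun v => w ↑v) y
        ≤ SearchCost (G.induce (Subtype.val '' c.supp)) (fun v => w ↑v) (R c) :=
      le_ciSup ((Set.finite_range _).bddAbove) y
    refine h1.trans ?_
    rw [hCdef]
    exact le_ciSup (f := fun c => SearchCost (G.induce (Subtype.val '' c.supp)) (fun v => w ↑v) (R c)) ((Set.finite_range _).bddAbove) c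
  have hC0 : 0 ≤ Ccomp := by
    rcases isEmpty_or_nonempty (G.induce Sᶜ).ConnectedComponent with he | hne
    · rw [hCdef, iSup_of_empty']
      rw [Real.sSup_empty]
    · obtain ⟨c⟩ := hne
      obtain ⟨a, ha⟩ := c.exists_rep
      have haS : a ∈ c.supp := by
        rw [SimpleGraph.ConnectedComponent.mem_supp_iff]; exact ha
      have := hCost_le c ⟨a.val, ⟨a, haS, rfl⟩⟩
      have h0 := cost_nonneg (G.induce (Subtype.val '' c.supp)) (fun v => w ↑v)
        (fun v => hw0 ↑v) (R c) ⟨a.val, ⟨a, haS, rfl⟩⟩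
      linarith
  have hsup0 : 0 ≤ ⨆ v : ↥S, w ↑v :=
    le_trans (hw0 s0) (le_ciSup (f := fun v : ↥S => w ↑v) ((Set.finite_range _).bddAbove) (⟨s0, hs0⟩ : ↥S))
  -- gate
  have hgate : ∀ x : V, ∃ g, g ∈ S ∧ ∀ v ∈ S, G.dist x g ≤ G.dist x v := by
    intro x
    obtain ⟨g, hgS, hmin⟩ :=
      Set.exists_min_image S (fun v => G.dist x v) (Set.toFinite S) ⟨s0, hs0⟩
    exact ⟨g, hgS, hmin⟩
  choose gate hgateS hgatemin using hgate
  -- the component-handling strategies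
  set comp : V → Strategy V := fun u =>
    if h : u ∈ Sᶜ then
      liftStrat _ (R ((G.induce Sᶜ).connectedComponentMk ⟨u, h⟩))
    else Strategy.guess u with hcompdef
  have comp_ok : ∀ x, x ∉ S →
      (comp (stepTo G (gate x) x)).run G x = x ∧
        (comp (stepTo G (gate x) x)).cost G w x ≤ Ccomp := by
    intro x hxS
    have hgx : gate x ≠ x := fun h => hxS (h ▸ hgateS x)
    obtain ⟨hadj, hdd⟩ := stepTo_adj hG hgx
    set u := stepTo G (gate x) x with hudef
    have huS : u ∉ S := by
      intro hu
      have := hgatemin x u hu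
      omega
    have hxC : x ∈ Sᶜ := hxS
    have huC : u ∈ Sᶜ := huS
    have hreach : (G.induce Sᶜ).Reachable ⟨x, hxC⟩ ⟨u, huC⟩ := by
      refine reach_compl hG (G.dist x u) x u hxC huC rfl ?_
      intro z hz
      have hmin := hgatemin x z
      by_contra hzS
      rw [Set.notMem_compl_iff] at hzS
      have := hmin hzS
      omega
    set c := (G.induce Sᶜ).connectedComponentMk ⟨u, huC⟩ with hcdef
    have hxmem : x ∈ Subtype.val '' c.supp := by
      refine ⟨⟨x, hxC⟩, ?_, rfl⟩
      rw [SimpleGraph.ConnectedComponent.mem_supp_iff, hcdef]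
      exact SimpleGraph.ConnectedComponent.sound hreach
    have hKconn := comp_supp_connected (G := G) (S := S) c
    have hspec := liftStrat_spec hG w hKconn (R c) hxmem
    have hcval : comp u = liftStrat _ (R c) := by
      rw [hcompdef]
      simp only [dif_pos huC]
      rfl
    constructor
    · rw [hcval, hspec.1, hR c ⟨x, hxmem⟩]
    · rw [hcval, hspec.2]
      exact hCost_le c ⟨x, hxmem⟩
  refine ⟨liftA S comp Astar, ?_, ?_⟩
  · intro x
    exact (phase1 hG w hw0 S hconn comp x (gate x) (hgateS x) (hgatemin x)
      Ccomp hC0 hsup0 (comp_ok x) Astar (hAstar _)).1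
  · rw [SearchCost]
    apply ciSup_le
    intro x
    have h2 := (phase1 hG w hw0 S hconn comp x (gate x) (hgateS x) (hgatemin x)
      Ccomp hC0 hsup0 (comp_ok x) Astar (hAstar _)).2
    refine le_trans h2 ?_
    have h3 : Astar.cost (G.induce S) (fun v => w ↑v) ⟨gate x, hgateS x⟩
        ≤ SearchCost (G.induce S) (fun v => w ↑v) Astar :=
      le_ciSup ((Set.finite_range _).bddAbove) (⟨gate x, hgateS x⟩ : ↥S)
    linarith
end
end

section
/- Let T be a node-weighted tree and C(T) its chain-contraction. Then OPT(C(T)) ≤ OPT(T). -/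
open scoped Classical
noncomputable section

/-- Generating relation for chain contraction: two vertices are related when they are adjacent
and both have degree `2`. The quotient `Quot (chainAdjRel G)` (by the equivalence closure)
contracts every long chain of `G` — every maximal path with more than one vertex all of whose
vertices have degree `2` — into a single vertex. -/
def chainAdjRel {V : Type} [Fintype V] (G : SimpleGraph V) (u v : V) : Prop :=
  G.Adj u v ∧ G.degree u = 2 ∧ G.degree v = 2

/-- The chain-contraction `C(T)` of `G`: the graph on the contracted vertices, two contracted
vertices being adjacent when they are distinct and joined by an edge of `G`. -/
def chainContract {V : Type} [Fintype V] (G : SimpleGraph V) :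
    SimpleGraph (Quot (chainAdjRel G)) where
  Adj A B := A ≠ B ∧
    ∃ a b, Quot.mk (chainAdjRel G) a = A ∧ Quot.mk (chainAdjRel G) b = B ∧ G.Adj a b
  symm := by
    constructor
    rintro A B ⟨hne, a, b, ha, hb, hab⟩
    exact ⟨hne.symm, b, a, hb, ha, hab.symm⟩
  loopless := by
    constructor
    rintro A ⟨hne, -⟩
    exact hne rfl

/-- Weight of a vertex of the chain-contraction: the minimum of `w` over the contracted set
(`min_{u ∈ V(P)} w(u)` for a contracted long chain `P`; the original weight otherwise). -/
noncomputable def contractWeight {V : Type} [Fintype V] (G : SimpleGraph V) (w : V → ℝ) :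
    Quot (chainAdjRel G) → ℝ :=
  fun A => sInf (w '' {a | Quot.mk (chainAdjRel G) a = A})

namespace ChainAux

open SimpleGraph


open SimpleGraph

variable {V : Type} {G : SimpleGraph V}

lemma exists_improving {s t : V} (h : G.Reachable s t) (hne : s ≠ t) :
    ∃ u, G.Adj t u ∧ G.dist s u < G.dist s t := by
  obtain ⟨p, hp⟩ := h.symm.exists_walk_length_eq_dist
  cases p with
  | nil => exact absurd rfl hne.symm
  | @cons _ u _ hAdj q =>
    refine ⟨u, hAdj, ?_⟩
    have h1 : G.dist u s ≤ q.length := SimpleGraph.dist_le q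
    rw [Walk.length_cons] at hp
    rw [SimpleGraph.dist_comm (u := s) (v := u), SimpleGraph.dist_comm (u := s) (v := t)]
    omega

lemma stepTo_spec (hc : G.Connected) {v x : V} (h : x ≠ v) :
    G.Adj v (stepTo G v x) ∧ G.dist x (stepTo G v x) < G.dist x v := by
  have hex : ∃ u, G.Adj v u ∧ G.dist x u < G.dist x v := exists_improving (hc x v) h
  rw [stepTo, dif_pos hex]
  exact hex.choose_spec

lemma step_unique (hG : G.IsTree) {v x u₁ u₂ : V}
    (h1 : G.Adj v u₁) (hd1 : G.dist x u₁ < G.dist x v)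
    (h2 : G.Adj v u₂) (hd2 : G.dist x u₂ < G.dist x v) : u₁ = u₂ := by
  by_contra hne
  have hc := hG.isConnected
  have build : ∀ u, G.Adj v u → G.dist x u < G.dist x v →
      ∃ r : G.Walk v x, r.IsPath ∧ r.getVert 1 = u := by
    intro u hu hdu
    obtain ⟨p, hp⟩ := (hc x u).exists_walk_length_eq_dist
    have hpath : p.IsPath := p.isPath_of_length_eq_dist hp
    have hvp : v ∉ p.support := by
      intro hv
      have e1 : G.dist x v ≤ (p.takeUntil v hv).length := SimpleGraph.dist_le _
      have e2 : (p.takeUntil v hv).length ≤ p.length := Walk.length_takeUntil_le p hv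
      omega
    refine ⟨Walk.cons hu p.reverse, ?_, ?_⟩
    · rw [Walk.cons_isPath_iff]
      exact ⟨hpath.reverse, by simpa [Walk.support_reverse] using hvp⟩
    · rw [Walk.getVert_cons_succ, Walk.getVert_zero]
  obtain ⟨r1, hr1, hg1⟩ := build u₁ h1 hd1
  obtain ⟨r2, hr2, hg2⟩ := build u₂ h2 hd2
  have hpq : (⟨r1, hr1⟩ : G.Path v x) = ⟨r2, hr2⟩ := hG.IsAcyclic.path_unique _ _
  have : r1 = r2 := congrArg Subtype.val hpq
  exact hne (by rw [← hg1, this, hg2])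

lemma stepTo_eq (hG : G.IsTree) {v x u : V} (hu : G.Adj v u) (hd : G.dist x u < G.dist x v) :
    stepTo G v x = u := by
  have hx : x ≠ v := by
    rintro rfl
    rw [SimpleGraph.dist_self] at hd
    exact Nat.not_lt_zero _ hd
  obtain ⟨ha, hb⟩ := stepTo_spec hG.isConnected hx
  exact step_unique hG ha hb hu hd

lemma step_adj (hG : G.IsTree) {v a c : V} (ha : a ≠ v) (hc : c ≠ v) (hac : G.Adj a c) :
    stepTo G v a = stepTo G v c := by
  have hcon := hG.isConnected
  have main : ∀ a c : V, a ≠ v → G.Adj a c → G.dist a v < G.dist c v →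
      stepTo G v a = stepTo G v c := by
    intro a c ha hac hlt
    obtain ⟨hadj, hd⟩ := stepTo_spec hcon ha
    have t1 : G.dist c (stepTo G v a) ≤ G.dist c a + G.dist a (stepTo G v a) :=
      hcon.dist_triangle
    have t2 : G.dist c a ≤ 1 := by
      have := SimpleGraph.dist_le (Walk.cons hac.symm Walk.nil)
      simpa using this
    have : G.dist c (stepTo G v a) < G.dist c v := by omega
    exact (stepTo_eq hG hadj this).symm
  rcases lt_trichotomy (G.dist a v) (G.dist c v) with hlt | heq | hgt
  · exact main a c ha hac hlt
  · exfalso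
    obtain ⟨pa, hpa⟩ := (hcon a v).exists_walk_length_eq_dist
    have hpath : pa.IsPath := pa.isPath_of_length_eq_dist hpa
    have hcs : c ∉ pa.support := by
      intro hm
      have e1 : G.dist a c ≤ (pa.takeUntil c hm).length := SimpleGraph.dist_le _
      have e2 : G.dist c v ≤ (pa.dropUntil c hm).length := SimpleGraph.dist_le _
      have e3 : (pa.takeUntil c hm).length + (pa.dropUntil c hm).length = pa.length := by
        rw [← Walk.length_append, Walk.take_spec]
      have e4 : 0 < G.dist a c := (hcon.pos_dist_of_ne hac.ne)
      omega
    have hq : (Walk.cons hac.symm pa).IsPath := hpath.cons hcs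
    obtain ⟨pc, hpc⟩ := (hcon c v).exists_walk_length_eq_dist
    have hpcp : pc.IsPath := pc.isPath_of_length_eq_dist hpc
    have hpq : (⟨Walk.cons hac.symm pa, hq⟩ : G.Path c v) = ⟨pc, hpcp⟩ :=
      hG.IsAcyclic.path_unique _ _
    have hlen : (Walk.cons hac.symm pa).length = pc.length :=
      congrArg Walk.length (Subtype.mk_eq_mk.mp hpq)
    rw [Walk.length_cons] at hlen
    omega
  · exact (main c a hc hac.symm hgt).symm

lemma step_walk (hG : G.IsTree) {v a b : V} (p : G.Walk a b) (hv : v ∉ p.support) :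
    stepTo G v a = stepTo G v b := by
  induction p with
  | nil => rfl
  | @cons a m b h q ih =>
    rw [Walk.support_cons] at hv
    have hva : a ≠ v := by rintro rfl; exact hv List.mem_cons_self
    have hvm : m ≠ v := by
      rintro rfl
      exact hv (List.mem_cons_of_mem _ (Walk.start_mem_support q))
    have hq : v ∉ q.support := fun hm => hv (List.mem_cons_of_mem _ hm)
    exact (step_adj hG hva hvm h).trans (ih hq)



open SimpleGraph

variable {V : Type} [Fintype V] {G : SimpleGraph V}

lemma class_walk {a b : V} (h : Quot.mk (chainAdjRel G) a = Quot.mk (chainAdjRel G) b) :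
    ∃ w : G.Walk a b, ∀ c ∈ w.support,
      Quot.mk (chainAdjRel G) c = Quot.mk (chainAdjRel G) a := by
  have h' := Quot.eq.mp h
  clear h
  induction h' with
  | rel x y hxy =>
    refine ⟨Walk.cons hxy.1 Walk.nil, ?_⟩
    intro c hc
    have hc' : c = x ∨ c = y := by
      simpa [Walk.support_cons, Walk.support_nil] using hc
    rcases hc' with rfl | rfl
    · rfl
    · exact (Quot.sound hxy).symm
  | refl x => exact ⟨Walk.nil, by simp⟩
  | symm x y hxy ih =>
    obtain ⟨w, hw⟩ := ih
    have hxy' : Quot.mk (chainAdjRel G) x = Quot.mk (chainAdjRel G) y :=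
      Quot.eqvGen_sound hxy
    refine ⟨w.reverse, fun c hc => ?_⟩
    rw [Walk.support_reverse, List.mem_reverse] at hc
    rw [hw c hc, hxy']
  | trans x y z h1 h2 ih1 ih2 =>
    obtain ⟨w1, hw1⟩ := ih1
    obtain ⟨w2, hw2⟩ := ih2
    have hxy' : Quot.mk (chainAdjRel G) x = Quot.mk (chainAdjRel G) y :=
      Quot.eqvGen_sound h1
    refine ⟨w1.append w2, fun c hc => ?_⟩
    rw [Walk.mem_support_append_iff] at hc
    rcases hc with hc | hc
    · exact hw1 c hc
    · rw [hw2 c hc, hxy']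

lemma reach_map {a b : V} (p : G.Walk a b) :
    (chainContract G).Reachable (Quot.mk (chainAdjRel G) a) (Quot.mk (chainAdjRel G) b) := by
  induction p with
  | nil => exact Reachable.refl _
  | @cons a m b h q ih =>
    by_cases he : Quot.mk (chainAdjRel G) a = Quot.mk (chainAdjRel G) m
    · rw [he]; exact ih
    · have hadj : (chainContract G).Adj (Quot.mk (chainAdjRel G) a) (Quot.mk (chainAdjRel G) m) :=
        ⟨he, a, m, rfl, rfl, h⟩
      exact hadj.reachable.trans ih

lemma lift_walk {A B : Quot (chainAdjRel G)} (W : (chainContract G).Walk A B) :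
    ∀ a b : V, Quot.mk (chainAdjRel G) a = A → Quot.mk (chainAdjRel G) b = B →
    ∃ w : G.Walk a b, ∀ c ∈ w.support, Quot.mk (chainAdjRel G) c ∈ W.support := by
  induction W with
  | nil =>
    intro a b ha hb
    obtain ⟨w, hw⟩ := class_walk (G := G) (ha.trans hb.symm)
    refine ⟨w, fun c hc => ?_⟩
    rw [Walk.support_nil, List.mem_singleton, hw c hc, ha]
  | @cons A A' B hAdj W ih =>
    intro a b ha hb
    obtain ⟨hne, p, q, hp, hq, hpq⟩ := id hAdj
    obtain ⟨w1, hw1⟩ := class_walk (G := G) (ha.trans hp.symm)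
    obtain ⟨w2, hw2⟩ := ih q b hq hb
    refine ⟨w1.append (Walk.cons hpq w2), fun c hc => ?_⟩
    rw [Walk.mem_support_append_iff] at hc
    rw [Walk.support_cons]
    rcases hc with hc | hc
    · rw [hw1 c hc, ha]; exact List.mem_cons_self
    · rw [Walk.support_cons, List.mem_cons] at hc
      rcases hc with rfl | hc
      · rw [hp]; exact List.mem_cons_self
      · exact List.mem_cons_of_mem _ (hw2 c hc)

lemma key (hG : G.IsTree) {v x y : V}
    (hne : Quot.mk (chainAdjRel G) x ≠ Quot.mk (chainAdjRel G) v)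
    (hy : Quot.mk (chainAdjRel G) y =
      stepTo (chainContract G) (Quot.mk (chainAdjRel G) v) (Quot.mk (chainAdjRel G) x)) :
    stepTo G v y = stepTo G v x := by
  have hreach : (chainContract G).Reachable
      (Quot.mk (chainAdjRel G) x) (Quot.mk (chainAdjRel G) v) :=
    reach_map (hG.isConnected x v).some
  have hex : ∃ u, (chainContract G).Adj (Quot.mk (chainAdjRel G) v) u ∧
      (chainContract G).dist (Quot.mk (chainAdjRel G) x) u <
      (chainContract G).dist (Quot.mk (chainAdjRel G) x) (Quot.mk (chainAdjRel G) v) :=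
    exists_improving hreach hne
  set U := stepTo (chainContract G) (Quot.mk (chainAdjRel G) v) (Quot.mk (chainAdjRel G) x)
    with hU
  have hspec : (chainContract G).Adj (Quot.mk (chainAdjRel G) v) U ∧
      (chainContract G).dist (Quot.mk (chainAdjRel G) x) U <
      (chainContract G).dist (Quot.mk (chainAdjRel G) x) (Quot.mk (chainAdjRel G) v) := by
    rw [hU, stepTo, dif_pos hex]
    exact hex.choose_spec
  by_contra hstep
  have hreach2 : (chainContract G).Reachable (Quot.mk (chainAdjRel G) x) U :=
    hreach.trans hspec.1.reachable
  obtain ⟨W, hW⟩ := hreach2.exists_walk_length_eq_dist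
  obtain ⟨w, hw⟩ := lift_walk W x y rfl hy
  have hv : v ∈ w.support := by
    by_contra hvw
    exact hstep (step_walk hG w hvw).symm
  have hphiv : Quot.mk (chainAdjRel G) v ∈ W.support := hw v hv
  have e1 : (chainContract G).dist (Quot.mk (chainAdjRel G) x) (Quot.mk (chainAdjRel G) v)
      ≤ (W.takeUntil _ hphiv).length := SimpleGraph.dist_le _
  have e2 : (chainContract G).dist (Quot.mk (chainAdjRel G) v) U
      ≤ (W.dropUntil _ hphiv).length := SimpleGraph.dist_le _
  have e3 : (W.takeUntil _ hphiv).length + (W.dropUntil _ hphiv).length = W.length := by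
    rw [← Walk.length_append, Walk.take_spec]
  have e4 : 0 < (chainContract G).dist (Quot.mk (chainAdjRel G) v) U :=
    hspec.1.reachable.pos_dist_of_ne hspec.1.ne
  have := hspec.2
  omega


section Strategy

variable {W : Type} {H : SimpleGraph W} {w : W → ℝ}

lemma cost_nonneg (hw : ∀ v, 0 ≤ w v) (A : Strategy W) : ∀ x : W, 0 ≤ A.cost H w x := by
  induction A with
  | guess y => intro x; simp [Strategy.cost]
  | ask v next ih =>
    intro x
    by_cases h : x = v
    · simp only [Strategy.cost, if_pos h]; exact hw v
    · simp only [Strategy.cost, if_neg h]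
      exact add_nonneg (hw v) (ih _ x)

lemma searchCost_nonneg [Finite W] (hw : ∀ v, 0 ≤ w v) (A : Strategy W) :
    0 ≤ SearchCost H w A := by
  cases isEmpty_or_nonempty W with
  | inl hE => rw [SearchCost, Real.iSup_of_isEmpty]
  | inr hN =>
    refine le_trans (cost_nonneg (H := H) hw A (Classical.arbitrary W)) ?_
    exact le_ciSup (Set.Finite.bddAbove (Set.finite_range _)) _

def askList (d : W) : List W → Strategy W
  | [] => Strategy.guess d
  | v :: l => Strategy.ask v (fun _ => askList d l)

lemma askList_run (d : W) : ∀ (l : List W) (x : W), x ∈ l → (askList d l).run H x = x := by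
  intro l
  induction l with
  | nil => intro x hx; cases hx
  | cons v l ih =>
    intro x hx
    by_cases h : x = v
    · simp only [askList, Strategy.run, if_pos h]; exact h.symm
    · have hx' : x ∈ l := by
        rcases List.mem_cons.mp hx with h' | h'
        · exact absurd h' h
        · exact h'
      simp only [askList, Strategy.run, if_neg h]
      exact ih x hx'

lemma exists_valid [Fintype W] [Nonempty W] (H : SimpleGraph W) :
    ∃ A : Strategy W, A.IsValid H :=
  ⟨askList (Classical.arbitrary W) Finset.univ.toList,
    fun x => askList_run _ _ x (by simp)⟩

lemma no_strategy (h : IsEmpty W) (A : Strategy W) : False := by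
  cases A with
  | guess x => exact h.false x
  | ask v _ => exact h.false v

end Strategy

variable {V : Type} [Fintype V] {G : SimpleGraph V}

noncomputable def sim (G : SimpleGraph V) [Fintype V] : Strategy V → Strategy (Quot (chainAdjRel G))
  | .guess x => .guess (Quot.mk _ x)
  | .ask v next => .ask (Quot.mk _ v) (fun B => sim G (next (stepTo G v (Quot.out B))))

lemma contractWeight_le (w : V → ℝ) (hw0 : ∀ v, 0 ≤ w v) (v : V) :
    contractWeight G w (Quot.mk (chainAdjRel G) v) ≤ w v := by
  apply csInf_le
  · refine ⟨0, ?_⟩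
    rintro t ⟨a, -, rfl⟩
    exact hw0 a
  · exact ⟨v, rfl, rfl⟩

lemma contractWeight_nonneg (w : V → ℝ) (hw0 : ∀ v, 0 ≤ w v) (A : Quot (chainAdjRel G)) :
    0 ≤ contractWeight G w A := by
  apply Real.sInf_nonneg
  rintro t ⟨a, -, rfl⟩
  exact hw0 a

lemma sim_step (hG : G.IsTree) {v x : V}
    (hne : Quot.mk (chainAdjRel G) x ≠ Quot.mk (chainAdjRel G) v) :
    stepTo G v (Quot.out (stepTo (chainContract G) (Quot.mk (chainAdjRel G) v)
      (Quot.mk (chainAdjRel G) x))) = stepTo G v x :=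
  key hG hne (Quot.out_eq (stepTo (chainContract G) (Quot.mk (chainAdjRel G) v)
    (Quot.mk (chainAdjRel G) x)))

lemma sim_cost (hG : G.IsTree) {w : V → ℝ} (hw0 : ∀ v, 0 ≤ w v) (A : Strategy V) :
    ∀ x : V, (sim G A).cost (chainContract G) (contractWeight G w) (Quot.mk (chainAdjRel G) x)
      ≤ A.cost G w x := by
  induction A with
  | guess y => intro x; simp [sim, Strategy.cost]
  | ask v next ih =>
    intro x
    by_cases h : Quot.mk (chainAdjRel G) x = Quot.mk (chainAdjRel G) v
    · simp only [sim, Strategy.cost, if_pos h]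
      refine le_trans (contractWeight_le w hw0 v) ?_
      by_cases hx : x = v
      · simp only [Strategy.cost, if_pos hx]
        exact le_refl _
      · simp only [Strategy.cost, if_neg hx]
        exact le_add_of_nonneg_right (cost_nonneg hw0 _ x)
    · have hx : x ≠ v := fun e => h (by rw [e])
      simp only [sim, Strategy.cost, if_neg h]
      rw [if_neg hx, sim_step hG h]
      exact add_le_add (contractWeight_le w hw0 v) (ih _ x)

lemma sim_run (hG : G.IsTree) (A : Strategy V) :
    ∀ x : V, A.run G x = x →
      (sim G A).run (chainContract G) (Quot.mk (chainAdjRel G) x) = Quot.mk (chainAdjRel G) x := by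
  induction A with
  | guess y =>
    intro x hx
    rw [Strategy.run] at hx
    simp [sim, Strategy.run, hx]
  | ask v next ih =>
    intro x hx
    by_cases h : Quot.mk (chainAdjRel G) x = Quot.mk (chainAdjRel G) v
    · simp only [sim, Strategy.run, if_pos h]
      exact h.symm
    · have hxv : x ≠ v := fun e => h (by rw [e])
      rw [Strategy.run, if_neg hxv] at hx
      simp only [sim, Strategy.run, if_neg h]
      rw [sim_step hG h]
      exact ih _ x hx

end ChainAux

/-- The optimal worst-case search cost of the chain-contraction of a
node-weighted tree is at most that of the tree itself: `OPT(C(T)) ≤ OPT(T)`. -/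
theorem stmt15 {V : Type} [Fintype V] (G : SimpleGraph V) (hG : G.IsTree)
    (w : V → ℝ) (hw0 : ∀ v, 0 ≤ w v) :
    OPT (chainContract G) (contractWeight G w) ≤ OPT G w := by
  classical
  cases isEmpty_or_nonempty V with
  | inl hV =>
    have hq : IsEmpty (Quot (chainAdjRel G)) := ⟨fun q => hV.false q.out⟩
    have h1 : {c | ∃ A : Strategy V, A.IsValid G ∧ SearchCost G w A = c} = ∅ := by
      ext c
      simp only [Set.mem_setOf_eq, Set.mem_empty_iff_false, iff_false, not_exists]
      intro A
      exact (ChainAux.no_strategy hV A).elim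
    have h2 : {c | ∃ A : Strategy (Quot (chainAdjRel G)),
        A.IsValid (chainContract G) ∧ SearchCost (chainContract G) (contractWeight G w) A = c}
        = ∅ := by
      ext c
      simp only [Set.mem_setOf_eq, Set.mem_empty_iff_false, iff_false, not_exists]
      intro A
      exact (ChainAux.no_strategy hq A).elim
    rw [OPT, OPT, h1, h2]
  | inr hV =>
    have hqne : Nonempty (Quot (chainAdjRel G)) :=
      ⟨Quot.mk _ (Classical.arbitrary V)⟩
    have hqfin : Finite (Quot (chainAdjRel G)) :=
      Finite.of_surjective (Quot.mk _) Quot.exists_rep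
    rw [OPT, OPT]
    apply le_csInf
    · obtain ⟨A, hA⟩ := ChainAux.exists_valid G
      exact ⟨_, A, hA, rfl⟩
    · rintro c ⟨A, hA, rfl⟩
      have hvalid : (ChainAux.sim G A).IsValid (chainContract G) := by
        intro X
        obtain ⟨x, rfl⟩ := Quot.exists_rep X
        exact ChainAux.sim_run hG A x (hA x)
      have hbdd : BddBelow {c | ∃ A' : Strategy (Quot (chainAdjRel G)),
          A'.IsValid (chainContract G) ∧
          SearchCost (chainContract G) (contractWeight G w) A' = c} := by
        refine ⟨0, ?_⟩
        rintro t ⟨A', -, rfl⟩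
        exact ChainAux.searchCost_nonneg (ChainAux.contractWeight_nonneg w hw0) A'
      refine le_trans (csInf_le hbdd ⟨ChainAux.sim G A, hvalid, rfl⟩) ?_
      rw [SearchCost, SearchCost]
      apply ciSup_le
      intro X
      obtain ⟨x, rfl⟩ := Quot.exists_rep X
      refine le_trans (ChainAux.sim_cost hG hw0 A x) ?_
      exact le_ciSup (Set.Finite.bddAbove (Set.finite_range _)) x
end
end

section
/- Let T be a rooted tree on n vertices, let α > 0, and let T* be a minimal α-separating tree of T. Then the chain-contraction C(T*) of T* has at most 4⌈n/α⌉ vertices. -/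
open scoped Classical
noncomputable section

/-- `v` is an ancestor of (or equal to) `u` in the tree `G` rooted at `r`: `v` lies on the
unique `r`–`u` path. Thus `{u | descends G r v u}` is the vertex set of the subtree `T_v`
of `G` rooted at `v`. -/
def descends {V : Type} (G : SimpleGraph V) (r v u : V) : Prop :=
  ∀ p : G.Walk r u, p.IsPath → v ∈ p.support

/-- `S` is (the vertex set of) an `α`-separating tree of the tree `G` rooted at `r`: a subtree
(connected subgraph) containing the root `r` such that every connected component of `T ∖ S`
has at most `α` vertices. -/
def IsSepTree {V : Type} (G : SimpleGraph V) (r : V) (α : ℝ) (S : Set V) : Prop :=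
  r ∈ S ∧ (G.induce S).Connected ∧
    ∀ c : (G.induce Sᶜ).ConnectedComponent, (c.supp.ncard : ℝ) ≤ α

/-- `v` is a leaf of the subtree with vertex set `S` of the tree `G` rooted at `r`: a vertex of
`S` having no strict descendant inside `S`. -/
def IsLeafOf {V : Type} (G : SimpleGraph V) (r : V) (S : Set V) (v : V) : Prop :=
  v ∈ S ∧ ∀ u ∈ S, descends G r v u → u = v

namespace Stmt17Aux

open SimpleGraph Walk

variable {V : Type} {G : SimpleGraph V}

/-- The second-to-last vertex of a walk. -/
def pen {u v : V} (p : G.Walk u v) : V := p.reverse.getVert 1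

lemma pen_concat {u v w : V} (p : G.Walk u v) (h : G.Adj v w) : pen (p.concat h) = v := by
  simp [pen, reverse_concat, getVert_cons_succ, getVert_zero]

lemma adj_pen {u v : V} (p : G.Walk u v) (hp : ¬ p.Nil) : G.Adj (pen p) v := by
  have : ¬ p.reverse.Nil := by
    simp only [nil_iff_length_eq, length_reverse] at hp ⊢; exact hp
  exact (p.reverse.adj_snd this).symm

lemma pen_mem_support {u v : V} (p : G.Walk u v) : pen p ∈ p.support := by
  by_cases hp : p.Nil
  · have : p.length = 0 := nil_iff_length_eq.mp hp
    have h1 : p.reverse.length = 0 := by simp [this]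
    have : pen p = u := by
      have := p.reverse.getVert_of_length_le (by omega : p.reverse.length ≤ 1)
      simpa [pen] using this
    rw [this]; exact p.start_mem_support
  · have hl : 0 < p.length := not_nil_iff_lt_length.mp hp
    have : pen p ∈ p.reverse.support := by
      rw [mem_support_iff_exists_getVert]
      exact ⟨1, rfl, by rw [length_reverse]; omega⟩
    rwa [support_reverse, List.mem_reverse] at this

lemma IsPath.concat' {a b c : V} {q : G.Walk a b} (hq : q.IsPath) (h : G.Adj b c)
    (hc : c ∉ q.support) : (q.concat h).IsPath := by
  rw [← isPath_reverse_iff, reverse_concat]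
  exact SimpleGraph.Walk.IsPath.cons hq.reverse (by simpa [support_reverse] using hc)

lemma reachable_induce {s : Set V} {a b : V} (ha : a ∈ s) (hb : b ∈ s) (p : G.Walk a b)
    (h : ∀ x ∈ p.support, x ∈ s) : (G.induce s).Reachable ⟨a, ha⟩ ⟨b, hb⟩ := by
  induction p with
  | nil => exact Reachable.refl _
  | @cons u x b hadj q ih =>
    have hx : x ∈ s := h x (by simp)
    have h1 : (G.induce s).Adj ⟨u, ha⟩ ⟨x, hx⟩ := by simpa using hadj
    exact (h1.reachable).trans (ih hx hb (fun y hy => h y (by simp [hy])))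

/-- The unique path between two vertices of a tree. -/
def thePath (hG : G.IsTree) (a b : V) : G.Walk a b := (hG.existsUnique_path a b).exists.choose

lemma thePath_isPath (hG : G.IsTree) (a b : V) : (thePath hG a b).IsPath :=
  (hG.existsUnique_path a b).exists.choose_spec

lemma path_eq (hG : G.IsTree) {a b : V} {p : G.Walk a b} (hp : p.IsPath) :
    p = thePath hG a b :=
  (hG.existsUnique_path a b).unique hp (thePath_isPath hG a b)

/-- All vertices of a path between two vertices of `S` lie in `S`. -/
lemma support_subset (hG : G.IsTree) {S : Set V} (hconn : (G.induce S).Connected)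
    {a b : V} (ha : a ∈ S) (hb : b ∈ S) {p : G.Walk a b} (hp : p.IsPath) :
    ∀ x ∈ p.support, x ∈ S := by
  obtain ⟨w⟩ := hconn.preconnected ⟨a, ha⟩ ⟨b, hb⟩
  have hq : ((w.bypass).map (SimpleGraph.Embedding.induce S).toHom).IsPath :=
    Walk.map_isPath_of_injective Subtype.val_injective w.bypass_isPath
  have hpe : p = (w.bypass).map (SimpleGraph.Embedding.induce S).toHom :=
    (path_eq hG hp).trans (path_eq hG hq).symm
  intro x hx
  rw [hpe] at hx
  have hx : x ∈ List.map (SimpleGraph.Embedding.induce (G := G) S).toHom w.bypass.support := by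
    rw [← Walk.support_map]; exact hx
  obtain ⟨y, _, rfl⟩ := List.mem_map.mp hx
  exact y.2

/-- If `v` is adjacent to `a` but not an ancestor of `a`, then `v ≠ r` and `a` is the
parent of `v`. -/
lemma adj_of_not_descends (hG : G.IsTree) {r v a : V} (hadj : G.Adj v a)
    (hnd : ¬ descends G r v a) : v ≠ r ∧ pen (thePath hG r v) = a := by
  rw [descends] at hnd
  push_neg at hnd
  obtain ⟨q, hq, hv⟩ := hnd
  have hQ : (q.concat hadj.symm).IsPath := IsPath.concat' hq hadj.symm hv
  constructor
  · rintro rfl; exact hv q.start_mem_support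
  · rw [← path_eq hG hQ, pen_concat]

/-- An interior vertex of a path has two distinct neighbors on the path. -/
lemma interior_two_nbrs {a b v : V} {p : G.Walk a b} (hp : p.IsPath) (hv : v ∈ p.support)
    (hva : v ≠ a) (hvb : v ≠ b) :
    ∃ x y, x ≠ y ∧ x ∈ p.support ∧ y ∈ p.support ∧ G.Adj v x ∧ G.Adj v y := by
  set t := p.takeUntil v hv with ht
  set d := p.dropUntil v hv with hd
  have hspec : t.append d = p := p.take_spec hv
  have hnodup : (t.support ++ d.support.tail).Nodup := by
    have := hp.support_nodup
    rwa [← hspec, Walk.support_append] at this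
  have htnil : ¬ t.Nil := Walk.not_nil_of_ne (Ne.symm hva)
  have hdnil : ¬ d.Nil := Walk.not_nil_of_ne hvb
  have hdl : 0 < d.length := not_nil_iff_lt_length.mp hdnil
  refine ⟨pen t, d.getVert 1, ?_, ?_, ?_, (adj_pen t htnil).symm, d.adj_snd hdnil⟩
  · intro heq
    have h1 : pen t ∈ t.support := pen_mem_support t
    have h2 : d.getVert 1 ∈ d.support := by
      rw [mem_support_iff_exists_getVert]; exact ⟨1, rfl, hdl⟩
    have h2' : d.getVert 1 ∈ d.support.tail := by
      have hne : d.getVert 1 ≠ v := (d.adj_snd hdnil).ne'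
      rw [d.support_eq_cons] at h2
      rcases List.mem_cons.mp h2 with h2 | h2
      · exact absurd h2 hne
      · exact h2
    have := List.disjoint_of_nodup_append hnodup
    exact this h1 (heq ▸ h2')
  · exact (Walk.support_takeUntil_subset p hv) (pen_mem_support t)
  · refine (Walk.support_dropUntil_subset p hv) ?_
    rw [mem_support_iff_exists_getVert]; exact ⟨1, rfl, hdl⟩


lemma leaf_nbr (hG : G.IsTree) {r : V} {S : Set V} {v : V} (hleaf : IsLeafOf G r S v)
    {a : V} (ha : a ∈ S) (hadj : G.Adj v a) :
    v ≠ r ∧ pen (thePath hG r v) = a := by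
  refine adj_of_not_descends hG hadj (fun hdesc => ?_)
  exact hadj.ne' (hleaf.2 a ha hdesc)

/-- A leaf of `S` is never an interior vertex of a path between vertices of `S`. -/
lemma leaf_not_interior (hG : G.IsTree) {r : V} {S : Set V}
    (hconn : (G.induce S).Connected) {v : V} (hleaf : IsLeafOf G r S v)
    {a b : V} (ha : a ∈ S) (hb : b ∈ S) {p : G.Walk a b} (hp : p.IsPath)
    (hv : v ∈ p.support) (hva : v ≠ a) (hvb : v ≠ b) : False := by
  obtain ⟨x, y, hxy, hxs, hys, hax, hay⟩ := interior_two_nbrs hp hv hva hvb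
  have hx := (leaf_nbr hG hleaf (support_subset hG hconn ha hb hp x hxs) hax).2
  have hy := (leaf_nbr hG hleaf (support_subset hG hconn ha hb hp y hys) hay).2
  exact hxy (hx.symm.trans hy)

lemma connected_erase (hG : G.IsTree) {r : V} {S : Set V}
    (hconn : (G.induce S).Connected) (hr : r ∈ S) {v : V} (hleaf : IsLeafOf G r S v)
    (hvr : v ≠ r) : (G.induce (S \ {v})).Connected := by
  have hrv : r ∈ S \ {v} := ⟨hr, fun h => hvr (by simpa using h.symm)⟩
  have key : ∀ (u : V) (hu : u ∈ S \ {v}),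
      (G.induce (S \ {v})).Reachable ⟨u, hu⟩ ⟨r, hrv⟩ := by
    intro u hu
    have hp := thePath_isPath hG u r
    have hsupp : ∀ x ∈ (thePath hG u r).support, x ∈ S \ {v} := by
      intro x hx
      have hxS : x ∈ S := support_subset hG hconn hu.1 hr hp x hx
      refine ⟨hxS, fun hxv => ?_⟩
      have hxv' : x = v := by simpa using hxv
      subst hxv'
      exact leaf_not_interior hG hconn hleaf hu.1 hr hp hx
        (fun h => hu.2 (by simpa using h.symm)) hvr
    exact reachable_induce hu hrv (thePath hG u r) hsupp
  rw [connected_iff]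
  exact ⟨fun x y => (key x.1 x.2).trans (key y.1 y.2).symm, ⟨⟨r, hrv⟩⟩⟩

variable [Fintype V]

/-- The set swallowed by deleting leaf `v`: the component of `v` in the complement of
`S \ {v}`. -/
def leafComp (G : SimpleGraph V) (S : Set V) (v : V) : Set V :=
  Subtype.val '' ((G.induce (S \ {v})ᶜ).connectedComponentMk ⟨v, fun h => h.2 rfl⟩).supp

lemma comp_small {S : Set V} {α : ℝ}
    (hsep3 : ∀ c : (G.induce Sᶜ).ConnectedComponent, ((c.supp.ncard : ℝ)) ≤ α)
    {v : V} (c : (G.induce (S \ {v})ᶜ).ConnectedComponent)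
    (hvc : (⟨v, fun h => h.2 rfl⟩ : ↥(S \ {v})ᶜ) ∉ c.supp) :
    ((c.supp.ncard : ℝ)) ≤ α := by
  obtain ⟨u₀, rfl⟩ := c.exists_rep
  have hvA : v ∈ (S \ {v})ᶜ := fun h => h.2 rfl
  have hu₀ : u₀ ∈ ((G.induce (S \ {v})ᶜ).connectedComponentMk u₀).supp := rfl
  have hne : ∀ u : ↥(S \ {v})ᶜ,
      u ∈ ((G.induce (S \ {v})ᶜ).connectedComponentMk u₀).supp → (u : V) ≠ v := by
    intro u hu huv
    exact hvc (by rwa [show (⟨v, hvA⟩ : ↥(S \ {v})ᶜ) = u from Subtype.ext huv.symm])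
  have hu0S : (u₀ : V) ∈ Sᶜ := by
    have h2 := u₀.2
    intro hS
    exact h2 ⟨hS, fun h => hne u₀ hu₀ (by simpa using h)⟩
  set c' := (G.induce Sᶜ).connectedComponentMk ⟨(u₀ : V), hu0S⟩ with hc'
  have himg : Subtype.val '' ((G.induce (S \ {v})ᶜ).connectedComponentMk u₀).supp ⊆
      Subtype.val '' c'.supp := by
    rintro x ⟨u, hu, rfl⟩
    have hreach : (G.induce (S \ {v})ᶜ).Reachable u u₀ :=
      (SimpleGraph.ConnectedComponent.eq.mp
        (SimpleGraph.ConnectedComponent.mem_supp_iff _ _ |>.mp hu))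
    obtain ⟨w⟩ := hreach
    have hvsup : ∀ y : ↥(S \ {v})ᶜ, y ∈ w.support → (y : V) ≠ v := by
      intro y hy hyv
      have : (G.induce (S \ {v})ᶜ).Reachable y u₀ := ⟨w.dropUntil y hy⟩
      have hymem : y ∈ ((G.induce (S \ {v})ᶜ).connectedComponentMk u₀).supp :=
        SimpleGraph.ConnectedComponent.mem_supp_iff _ _ |>.mpr
          (SimpleGraph.ConnectedComponent.sound this)
      exact hne y hymem hyv
    set W := w.map (SimpleGraph.Embedding.induce (S \ {v})ᶜ).toHom with hW
    have hWsupp : ∀ x ∈ W.support, x ∈ Sᶜ := by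
      intro x hx
      rw [hW, Walk.support_map] at hx
      obtain ⟨y, hy, rfl⟩ := List.mem_map.mp hx
      intro hxS
      exact y.2 ⟨hxS, fun h => hvsup y hy (by simpa using h)⟩
    have huS : (u : V) ∈ Sᶜ := hWsupp _ W.start_mem_support
    have := reachable_induce huS hu0S W hWsupp
    exact ⟨⟨(u : V), huS⟩, SimpleGraph.ConnectedComponent.mem_supp_iff _ _ |>.mpr
      (SimpleGraph.ConnectedComponent.sound this), rfl⟩
  have h1 : ((G.induce (S \ {v})ᶜ).connectedComponentMk u₀).supp.ncard ≤ c'.supp.ncard := by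
    rw [← Set.ncard_image_of_injective _ Subtype.val_injective,
      ← Set.ncard_image_of_injective c'.supp Subtype.val_injective]
    exact Set.ncard_le_ncard himg (Set.toFinite _)
  exact le_trans (by exact_mod_cast h1) (hsep3 c')

lemma big_leafComp (hG : G.IsTree) {r : V} {S : Set V} {α : ℝ}
    (hconn : (G.induce S).Connected) (hr : r ∈ S)
    (hsep3 : ∀ c : (G.induce Sᶜ).ConnectedComponent, ((c.supp.ncard : ℝ)) ≤ α)
    {v : V} (hleaf : IsLeafOf G r S v) (hvr : v ≠ r)
    (hnot : ¬ IsSepTree G r α (S \ {v})) :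
    α < (((leafComp G S v).ncard : ℝ)) := by
  have hA : r ∈ S \ {v} := ⟨hr, fun h => hvr (by simpa using h.symm)⟩
  have hB := connected_erase hG hconn hr hleaf hvr
  have hC : ¬ ∀ c : (G.induce (S \ {v})ᶜ).ConnectedComponent, ((c.supp.ncard : ℝ)) ≤ α :=
    fun h => hnot ⟨hA, hB, h⟩
  push_neg at hC
  obtain ⟨c, hc⟩ := hC
  have hvc : (⟨v, fun h => h.2 rfl⟩ : ↥(S \ {v})ᶜ) ∈ c.supp := by
    by_contra hvc
    exact absurd (comp_small hsep3 c hvc) (not_le.mpr hc)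
  have hceq : (G.induce (S \ {v})ᶜ).connectedComponentMk ⟨v, fun h => h.2 rfl⟩ = c :=
    SimpleGraph.ConnectedComponent.mem_supp_iff _ _ |>.mp hvc
  rw [leafComp, hceq, Set.ncard_image_of_injective _ Subtype.val_injective]
  exact hc

lemma leafComp_walk {S : Set V} {v u : V} (hu : u ∈ leafComp G S v) :
    ∃ w : G.Walk v u, ∀ x ∈ w.support, x ∈ Sᶜ ∪ {v} := by
  obtain ⟨u1, hu1, rfl⟩ := hu
  have hreach : (G.induce (S \ {v})ᶜ).Reachable ⟨v, fun h => h.2 rfl⟩ u1 :=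
    (SimpleGraph.ConnectedComponent.eq.mp
      (SimpleGraph.ConnectedComponent.mem_supp_iff _ _ |>.mp hu1)).symm
  obtain ⟨w⟩ := hreach
  refine ⟨w.map (SimpleGraph.Embedding.induce (S \ {v})ᶜ).toHom, ?_⟩
  intro x hx
  have hx : x ∈ List.map (SimpleGraph.Embedding.induce (G := G) (S \ {v})ᶜ).toHom w.support := by
    rw [← Walk.support_map]; exact hx
  obtain ⟨y, _, rfl⟩ := List.mem_map.mp hx
  have h2 := y.2
  by_cases hyv : (y : V) = v
  · exact Or.inr hyv
  · exact Or.inl (fun hS => h2 ⟨hS, fun h => hyv (by simpa using h)⟩)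

lemma mem_leafComp_self {S : Set V} (v : V) : v ∈ leafComp G S v :=
  ⟨⟨v, fun h => h.2 rfl⟩, rfl, rfl⟩

lemma leafComp_disjoint (hG : G.IsTree) {r : V} {S : Set V}
    (hconn : (G.induce S).Connected) {v w : V}
    (hlv : IsLeafOf G r S v) (hlw : IsLeafOf G r S w) (hvw : v ≠ w) :
    Disjoint (leafComp G S v) (leafComp G S w) := by
  rw [Set.disjoint_left]
  intro u hu1 hu2
  obtain ⟨w1, hw1⟩ := leafComp_walk hu1
  obtain ⟨w2, hw2⟩ := leafComp_walk hu2
  set comb := w1.append w2.reverse with hcomb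
  set bp := comb.bypass with hbp
  have hbpp : bp.IsPath := comb.bypass_isPath
  have hsub : ∀ x ∈ bp.support, x = v ∨ x = w := by
    intro x hx
    have hxS : x ∈ S := support_subset hG hconn hlv.1 hlw.1 hbpp x hx
    have hxc : x ∈ comb.support := comb.support_bypass_subset hx
    rw [hcomb, Walk.mem_support_append_iff] at hxc
    rcases hxc with hxc | hxc
    · rcases hw1 x hxc with h | h
      · exact absurd hxS h
      · exact Or.inl (by simpa using h)
    · rw [Walk.support_reverse, List.mem_reverse] at hxc
      rcases hw2 x hxc with h | h
      · exact absurd hxS h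
      · exact Or.inr (by simpa using h)
  have hlen : bp.length ≤ 1 := by
    have hnd : bp.support.Nodup := hbpp.support_nodup
    have hsubf : bp.support.toFinset ⊆ ({v, w} : Finset V) := by
      intro x hx
      rw [List.mem_toFinset] at hx
      rcases hsub x hx with h | h <;> simp [h]
    have hcard : bp.support.toFinset.card ≤ 2 :=
      le_trans (Finset.card_le_card hsubf)
        (le_trans (Finset.card_insert_le _ _) (by simp))
    rw [List.toFinset_card_of_nodup hnd, Walk.length_support] at hcard
    omega
  interval_cases h : bp.length
  · exact hvw (Walk.eq_of_length_eq_zero h)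
  · have hadj : G.Adj v w := Walk.adj_of_length_eq_one h
    have hpen := (leaf_nbr hG hlv hlw.1 hadj).2
    have hdesc : descends G r w v := by
      intro q hq
      rw [path_eq hG hq, ← hpen]
      exact pen_mem_support _
    exact hvw (hlw.2 v hlv.1 hdesc)


/-- If `c` is a neighbor of `v` other than its parent, then `v` is the parent of `c`. -/
lemma child_path (hG : G.IsTree) {r v c : V} (hvr : v ≠ r) (hadj : G.Adj v c)
    (hcp : c ≠ pen (thePath hG r v)) :
    pen (thePath hG r c) = v ∧ (thePath hG r c).length = (thePath hG r v).length + 1 ∧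
      c ≠ r := by
  set P := thePath hG r v with hPdef
  have hP : P.IsPath := thePath_isPath hG r v
  have hcsup : c ∉ P.support := by
    intro hc
    set t := P.takeUntil c hc with htdef
    have htp : t.IsPath := hP.takeUntil hc
    have hbnot : v ∉ t.support := by
      have hnodup : (t.support ++ (P.dropUntil c hc).support.tail).Nodup := by
        rw [← Walk.support_append, P.take_spec hc]; exact hP.support_nodup
      have hvd : v ∈ (P.dropUntil c hc).support.tail := by
        have hv : v ∈ (P.dropUntil c hc).support := Walk.end_mem_support _
        rw [(P.dropUntil c hc).support_eq_cons] at hv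
        rcases List.mem_cons.mp hv with h | h
        · exact absurd h hadj.ne
        · exact h
      exact fun hvt => (List.disjoint_of_nodup_append hnodup) hvt hvd
    have hQ : (t.concat hadj.symm).IsPath := IsPath.concat' htp hadj.symm hbnot
    have heq : t.concat hadj.symm = P := by rw [hPdef]; exact path_eq hG hQ
    have hpen : pen P = c := by rw [← heq, pen_concat]
    exact hcp hpen.symm
  have hQ' : (P.concat hadj).IsPath := IsPath.concat' hP hadj hcsup
  have heq : P.concat hadj = thePath hG r c := path_eq hG hQ'
  have hlen : (thePath hG r c).length = P.length + 1 := by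
    rw [← heq, Walk.length_concat]
  refine ⟨by rw [← heq, pen_concat], hlen, ?_⟩
  intro hcr
  rw [hcr] at hlen
  have h0 : thePath hG r r = Walk.nil := Walk.isPath_iff_eq_nil.mp (thePath_isPath hG r r)
  rw [h0] at hlen
  simp at hlen

lemma htree_induce [Fintype V] (hG : G.IsTree) {S : Set V}
    (hconn : (G.induce S).Connected) : (G.induce S).IsTree := by
  refine ⟨hconn, ?_⟩
  intro v c hc
  exact hG.IsAcyclic _ ((Walk.map_isCycle_iff_of_injective
    (f := (SimpleGraph.Embedding.induce S).toHom) Subtype.val_injective).mpr hc)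

lemma eqvGen_deg {W : Type} [Fintype W] {H : SimpleGraph W} {a b : W}
    (h : Relation.EqvGen (chainAdjRel H) a b) :
    a = b ∨ (H.degree a = 2 ∧ H.degree b = 2) := by
  induction h with
  | rel x y hxy => exact Or.inr ⟨hxy.2.1, hxy.2.2⟩
  | refl x => exact Or.inl rfl
  | symm x y _ ih => rcases ih with h | h
                     · exact Or.inl h.symm
                     · exact Or.inr ⟨h.2, h.1⟩
  | trans x y z _ _ ih1 ih2 =>
      rcases ih1 with h1 | h1
      · exact h1 ▸ ih2
      · rcases ih2 with h2 | h2
        · exact Or.inr ⟨h1.1, h2 ▸ h1.2⟩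
        · exact Or.inr ⟨h1.1, h2.2⟩

lemma handshake {W : Type} [Fintype W] {H : SimpleGraph W} (ht : H.IsTree)
    (h2 : 2 ≤ Fintype.card W) :
    (Finset.univ.filter (fun x => H.degree x ≠ 2)).card + 2 ≤
      2 * (Finset.univ.filter (fun x => H.degree x ≤ 1)).card := by
  classical
  have hmin : ∀ x : W, 1 ≤ H.degree x := by
    intro x
    obtain ⟨y, hy⟩ := Fintype.exists_ne_of_one_lt_card (by omega) x
    obtain ⟨w⟩ := ht.isConnected.preconnected x y
    have hnil : ¬ w.Nil := Walk.not_nil_of_ne (fun h => hy h.symm)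
    exact (H.degree_pos_iff_exists_adj x).mpr ⟨w.getVert 1, w.adj_snd hnil⟩
  have hsum : ∑ x : W, H.degree x + 2 = 2 * Fintype.card W := by
    have hd := H.sum_degrees_eq_twice_card_edges
    have he := ht.card_edgeFinset
    omega
  set A := Finset.univ.filter (fun x => H.degree x ≤ 1) with hA
  set Cs := (Finset.univ.filter (fun x => ¬ H.degree x ≤ 1)).filter
      (fun x => H.degree x ≠ 2) with hCs
  have htotal : ∑ x : W, ((H.degree x : ℤ) - 2) = -2 := by
    have hsInt : ((∑ x : W, H.degree x : ℕ) : ℤ) + 2 = 2 * (Fintype.card W : ℤ) := by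
      exact_mod_cast hsum
    rw [Finset.sum_sub_distrib, Finset.sum_const, Finset.card_univ, ← Nat.cast_sum]
    simp only [nsmul_eq_mul]
    omega
  have hsplit : (∑ x ∈ A, ((H.degree x : ℤ) - 2)) +
      ∑ x ∈ Finset.univ.filter (fun x => ¬ H.degree x ≤ 1), ((H.degree x : ℤ) - 2) =
      ∑ x : W, ((H.degree x : ℤ) - 2) :=
    Finset.sum_filter_add_sum_filter_not _ _ _
  have hAsum : ∑ x ∈ A, ((H.degree x : ℤ) - 2) = - A.card := by
    have : ∀ x ∈ A, ((H.degree x : ℤ) - 2) = -1 := by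
      intro x hx
      have hx1 : H.degree x ≤ 1 := (Finset.mem_filter.mp hx).2
      have hx2 := hmin x
      have : H.degree x = 1 := le_antisymm hx1 hx2
      rw [this]; norm_num
    rw [Finset.sum_congr rfl this, Finset.sum_const]
    simp
  have hCsum : (Cs.card : ℤ) ≤
      ∑ x ∈ Finset.univ.filter (fun x => ¬ H.degree x ≤ 1), ((H.degree x : ℤ) - 2) := by
    calc (Cs.card : ℤ) = ∑ _x ∈ Cs, (1 : ℤ) := by simp
      _ ≤ ∑ x ∈ Cs, ((H.degree x : ℤ) - 2) := by
          refine Finset.sum_le_sum (fun x hx => ?_)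
          have h1 := (Finset.mem_filter.mp hx).2
          have h2 := (Finset.mem_filter.mp (Finset.mem_filter.mp hx).1).2
          have : 3 ≤ H.degree x := by omega
          have : (3 : ℤ) ≤ (H.degree x : ℤ) := by exact_mod_cast this
          omega
      _ ≤ ∑ x ∈ Finset.univ.filter (fun x => ¬ H.degree x ≤ 1), ((H.degree x : ℤ) - 2) := by
          refine Finset.sum_le_sum_of_subset_of_nonneg (Finset.filter_subset _ _)
            (fun x hx _ => ?_)
          have h2 := (Finset.mem_filter.mp hx).2
          have : 2 ≤ H.degree x := by omega
          have : (2 : ℤ) ≤ (H.degree x : ℤ) := by exact_mod_cast this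
          omega
  have hK : (Finset.univ.filter (fun x => H.degree x ≠ 2)).card ≤ A.card + Cs.card := by
    refine le_trans (Finset.card_le_card ?_) (Finset.card_union_le A Cs)
    intro x hx
    have hx2 := (Finset.mem_filter.mp hx).2
    rw [Finset.mem_union]
    by_cases h1 : H.degree x ≤ 1
    · exact Or.inl (Finset.mem_filter.mpr ⟨Finset.mem_univ x, h1⟩)
    · exact Or.inr (Finset.mem_filter.mpr ⟨Finset.mem_filter.mpr
        ⟨Finset.mem_univ x, h1⟩, hx2⟩)
  have hfin : (Cs.card : ℤ) + 2 ≤ (A.card : ℤ) := by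
    rw [← hsplit, hAsum] at htotal
    omega
  have : Cs.card + 2 ≤ A.card := by exact_mod_cast hfin
  omega


lemma quot_bound (hG : G.IsTree) {r : V} {S : Set V}
    (hconn : (G.induce S).Connected) (hr : r ∈ S) :
    Nat.card (Quot (chainAdjRel (G.induce S))) ≤
      2 * (Finset.univ.filter (fun x : ↥S => (G.induce S).degree x ≠ 2)).card + 1 := by
  classical
  set H := G.induce S with hH
  let Mf := {x : ↥S // H.degree x ≠ 2}
  let f : Mf ⊕ Mf ⊕ Unit → Quot (chainAdjRel H) := fun i =>
    match i with
    | Sum.inl x => Quot.mk _ x.1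
    | Sum.inr (Sum.inl x) =>
        Quot.mk _ (if h : (x.1 : V) = r then x.1
          else ⟨pen (thePath hG r x.1), support_subset hG hconn hr x.1.2
            (thePath_isPath hG r x.1) _ (pen_mem_support _)⟩)
    | Sum.inr (Sum.inr _) => Quot.mk _ (⟨r, hr⟩ : ↥S)
  have hsurj : Function.Surjective f := by
    intro q
    induction q using Quot.ind with
    | _ x =>
    by_cases hx : H.degree x = 2
    swap
    · exact ⟨Sum.inl ⟨x, hx⟩, rfl⟩
    by_cases hrC : Relation.EqvGen (chainAdjRel H) x ⟨r, hr⟩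
    · exact ⟨Sum.inr (Sum.inr ()), (Quot.eqvGen_sound hrC).symm⟩
    · set Cf := Finset.univ.filter
        (fun u : ↥S => Relation.EqvGen (chainAdjRel H) x u) with hCf
      have hCne : Cf.Nonempty := ⟨x, by simp [hCf, Relation.EqvGen.refl]⟩
      obtain ⟨b, hbC, hbmax⟩ := Finset.exists_max_image Cf
        (fun u => (thePath hG r (u : V)).length) hCne
      have hxb : Relation.EqvGen (chainAdjRel H) x b := by
        have := (Finset.mem_filter.mp hbC).2
        simpa using this
      have hdb : H.degree b = 2 := by
        rcases eqvGen_deg hxb with h | h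
        · exact h ▸ hx
        · exact h.2
      have hbr : (b : V) ≠ r := by
        intro h
        exact hrC (by rwa [show (⟨r, hr⟩ : ↥S) = b from Subtype.ext h.symm])
      have hnil : ¬ (thePath hG r (b : V)).Nil :=
        Walk.not_nil_of_ne (fun h => hbr h.symm)
      have hpadj : G.Adj (pen (thePath hG r (b : V))) (b : V) := adj_pen _ hnil
      have hpS : pen (thePath hG r (b : V)) ∈ S :=
        support_subset hG hconn hr b.2 (thePath_isPath hG r (b : V)) _ (pen_mem_support _)
      have hadjH : H.Adj b ⟨pen (thePath hG r (b : V)), hpS⟩ := hpadj.symm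
      have hcard2 : 1 < (H.neighborFinset b).card := by
        rw [SimpleGraph.card_neighborFinset_eq_degree, hdb]
        omega
      obtain ⟨c, hcmem, hcp⟩ := Finset.exists_mem_ne hcard2
        ⟨pen (thePath hG r (b : V)), hpS⟩
      have hcadj : H.Adj b c := by rwa [SimpleGraph.mem_neighborFinset] at hcmem
      have hGadj : G.Adj (b : V) (c : V) := hcadj
      have hcpen : (c : V) ≠ pen (thePath hG r (b : V)) := fun h => hcp (Subtype.ext h)
      obtain ⟨hpenc, hlen, hcr⟩ := child_path hG hbr hGadj hcpen
      have hdc : H.degree c ≠ 2 := by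
        intro h2c
        have hrel : chainAdjRel H b c := ⟨hcadj, hdb, h2c⟩
        have hcC : c ∈ Cf := Finset.mem_filter.mpr ⟨Finset.mem_univ _,
          Relation.EqvGen.trans _ _ _ hxb (Relation.EqvGen.rel _ _ hrel)⟩
        have hm := hbmax c hcC
        omega
      refine ⟨Sum.inr (Sum.inl ⟨c, hdc⟩), ?_⟩
      calc f (Sum.inr (Sum.inl ⟨c, hdc⟩))
          = Quot.mk _ b := by
            show Quot.mk _ (dite _ _ _) = _
            rw [dif_neg hcr]
            exact congrArg _ (Subtype.ext hpenc)
        _ = Quot.mk _ x := (Quot.eqvGen_sound hxb).symm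
  have hle := Nat.card_le_card_of_surjective f hsurj
  have hMf : Nat.card Mf = (Finset.univ.filter (fun x : ↥S => H.degree x ≠ 2)).card := by
    rw [Nat.card_eq_fintype_card, Fintype.card_subtype]
  rw [Nat.card_sum, Nat.card_sum, hMf] at hle
  have hunit : Nat.card Unit = 1 := by simp
  rw [hunit] at hle
  have hgoal : Nat.card (Quot (chainAdjRel H)) ≤
      2 * (Finset.univ.filter (fun x : ↥S => H.degree x ≠ 2)).card + 1 := by omega
  exact hgoal

lemma leaf_count (hG : G.IsTree) {r : V} {S : Set V}
    (hconn : (G.induce S).Connected) (hr : r ∈ S) :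
    (Finset.univ.filter (fun x : ↥S => (G.induce S).degree x ≤ 1)).card ≤
      {v : V | v ≠ r ∧ IsLeafOf G r S v}.ncard + 1 := by
  classical
  set L := {v : V | v ≠ r ∧ IsLeafOf G r S v} with hL
  set lF := Finset.univ.filter (fun x : ↥S => (G.induce S).degree x ≤ 1) with hlF
  have hstep : (lF.erase ⟨r, hr⟩).card ≤ L.ncard := by
    rw [Set.ncard_eq_toFinset_card' L]
    refine Finset.card_le_card_of_injOn (fun x => (x : V)) ?_ ?_
    · intro x hx
      rw [Finset.mem_coe] at hx
      rw [Finset.mem_coe, Set.mem_toFinset]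
      have hxr : x ≠ ⟨r, hr⟩ := (Finset.mem_erase.mp hx).1
      have hdeg : (G.induce S).degree x ≤ 1 :=
        (Finset.mem_filter.mp (Finset.mem_erase.mp hx).2).2
      have hxr' : (x : V) ≠ r := fun h => hxr (Subtype.ext h)
      refine ⟨hxr', x.2, ?_⟩
      intro u hu hdesc
      by_contra hne
      have hsup : (x : V) ∈ (thePath hG r u).support := hdesc _ (thePath_isPath hG r u)
      obtain ⟨y1, y2, hy12, hy1s, hy2s, ha1, ha2⟩ := interior_two_nbrs
        (thePath_isPath hG r u) hsup hxr' (fun h => hne h.symm)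
      have hy1S : y1 ∈ S := support_subset hG hconn hr hu (thePath_isPath hG r u) y1 hy1s
      have hy2S : y2 ∈ S := support_subset hG hconn hr hu (thePath_isPath hG r u) y2 hy2s
      have hm1 : (⟨y1, hy1S⟩ : ↥S) ∈ (G.induce S).neighborFinset x :=
        (SimpleGraph.mem_neighborFinset _ _ _).mpr ha1
      have hm2 : (⟨y2, hy2S⟩ : ↥S) ∈ (G.induce S).neighborFinset x :=
        (SimpleGraph.mem_neighborFinset _ _ _).mpr ha2
      have hcard : 1 < ((G.induce S).neighborFinset x).card :=
        Finset.one_lt_card.mpr ⟨_, hm1, _, hm2, fun h => hy12 (by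
          simpa using congrArg Subtype.val h)⟩
      rw [SimpleGraph.card_neighborFinset_eq_degree] at hcard
      omega
    · exact fun a _ b _ h => Subtype.ext h
  have hstep2 : lF.card ≤ (lF.erase ⟨r, hr⟩).card + 1 := by
    by_cases h : (⟨r, hr⟩ : ↥S) ∈ lF
    · rw [Finset.card_erase_add_one h]
    · rw [Finset.erase_eq_of_notMem h]
      omega
  omega

end Stmt17Aux

/-- If `T*` is a minimal `α`-separating tree of a rooted tree `T` on `n`
vertices, then the chain-contraction `C(T*)` has at most `4⌈n/α⌉` vertices. -/
theorem stmt17 {V : Type} [Fintype V] (G : SimpleGraph V) (hG : G.IsTree) (r : V)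
    (α : ℝ) (hα : 0 < α) (S : Set V)
    (hsep : IsSepTree G r α S)
    (hmin : ∀ v, IsLeafOf G r S v → ¬ IsSepTree G r α (S \ {v})) :
    ((Nat.card (Quot (chainAdjRel (G.induce S))) : ℝ) ≤
      4 * (⌈(Fintype.card V : ℝ) / α⌉ : ℝ)) := by
  classical
  obtain ⟨hr, hconn, hsep3⟩ := hsep
  have hn1 : 1 ≤ Fintype.card V := Fintype.card_pos_iff.mpr ⟨r⟩
  have hx0 : 0 < (Fintype.card V : ℝ) / α := by
    apply div_pos _ hα
    exact_mod_cast hn1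
  have hceil1 : (1 : ℤ) ≤ ⌈(Fintype.card V : ℝ) / α⌉ := Int.ceil_pos.mpr hx0
  have hceilR : (1 : ℝ) ≤ (⌈(Fintype.card V : ℝ) / α⌉ : ℝ) := by exact_mod_cast hceil1
  by_cases hS2 : Fintype.card ↥S < 2
  · have hle : Nat.card (Quot (chainAdjRel (G.induce S))) ≤ Fintype.card ↥S := by
      have h := Nat.card_le_card_of_surjective (Quot.mk (chainAdjRel (G.induce S)))
        (fun q => Quot.exists_rep q)
      rwa [Nat.card_eq_fintype_card (α := ↥S)] at h
    have h1 : (Nat.card (Quot (chainAdjRel (G.induce S))) : ℝ) ≤ 1 := by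
      have : Nat.card (Quot (chainAdjRel (G.induce S))) ≤ 1 := by omega
      exact_mod_cast this
    linarith
  · push_neg at hS2
    set L := {v : V | v ≠ r ∧ IsLeafOf G r S v} with hLdef
    have hLfin : L.Finite := Set.toFinite L
    have hsum : (L.ncard : ℝ) * α < (Fintype.card V : ℝ) := by
      rcases Set.eq_empty_or_nonempty L with hLe | hLne
      · rw [hLe, Set.ncard_empty]
        have : (0 : ℝ) < (Fintype.card V : ℝ) := by exact_mod_cast hn1
        simpa using this
      · set Lf := hLfin.toFinset with hLf
        have hLne' : Lf.Nonempty := by rwa [Set.Finite.toFinset_nonempty]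
        have hdisjF : ∀ v ∈ Lf, ∀ w ∈ Lf, v ≠ w →
            Disjoint ((Stmt17Aux.leafComp G S v).toFinset)
              ((Stmt17Aux.leafComp G S w).toFinset) := by
          intro v hv w hw hvw
          rw [hLf, Set.Finite.mem_toFinset] at hv hw
          rw [Set.disjoint_toFinset]
          exact Stmt17Aux.leafComp_disjoint hG hconn hv.2 hw.2 hvw
        have h1 : ∑ v ∈ Lf, ((Stmt17Aux.leafComp G S v).toFinset).card =
            (Lf.biUnion (fun v => (Stmt17Aux.leafComp G S v).toFinset)).card :=
          (Finset.card_biUnion hdisjF).symm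
        have h2 : (Lf.biUnion (fun v => (Stmt17Aux.leafComp G S v).toFinset)).card ≤
            Fintype.card V := Finset.card_le_univ _
        have h3 : (Lf.card : ℝ) * α <
            ∑ v ∈ Lf, (((Stmt17Aux.leafComp G S v).toFinset).card : ℝ) := by
          have hlt : ∀ v ∈ Lf, α < (((Stmt17Aux.leafComp G S v).toFinset).card : ℝ) := by
            intro v hv
            rw [hLf, Set.Finite.mem_toFinset] at hv
            have hb := Stmt17Aux.big_leafComp hG hconn hr hsep3 hv.2 hv.1 (hmin v hv.2)
            rwa [Set.ncard_eq_toFinset_card' _] at hb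
          calc (Lf.card : ℝ) * α = ∑ _v ∈ Lf, α := by rw [Finset.sum_const, nsmul_eq_mul]
            _ < _ := Finset.sum_lt_sum_of_nonempty hLne' hlt
        have h4 : (∑ v ∈ Lf, (((Stmt17Aux.leafComp G S v).toFinset).card : ℝ)) ≤
            (Fintype.card V : ℝ) := by
          rw [← Nat.cast_sum]
          exact_mod_cast (h1 ▸ h2)
        have hLcard : L.ncard = Lf.card := Set.ncard_eq_toFinset_card _ hLfin
        rw [hLcard]
        linarith
    have hLZ : (L.ncard : ℤ) + 1 ≤ ⌈(Fintype.card V : ℝ) / α⌉ := by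
      have hLlt : (L.ncard : ℝ) < (Fintype.card V : ℝ) / α := by
        rwa [lt_div_iff₀ hα]
      have h5 : ((L.ncard : ℤ) : ℝ) < (⌈(Fintype.card V : ℝ) / α⌉ : ℝ) :=
        lt_of_lt_of_le (by exact_mod_cast hLlt) (Int.le_ceil _)
      have h6 : (L.ncard : ℤ) < ⌈(Fintype.card V : ℝ) / α⌉ := by exact_mod_cast h5
      omega
    have hquot := Stmt17Aux.quot_bound hG hconn hr
    have hhand : (Finset.univ.filter (fun x : ↥S => (G.induce S).degree x ≠ 2)).card + 2 ≤
        2 * (Finset.univ.filter (fun x : ↥S => (G.induce S).degree x ≤ 1)).card := by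
      convert Stmt17Aux.handshake (Stmt17Aux.htree_induce hG hconn) hS2
    have hleafc := Stmt17Aux.leaf_count hG hconn hr
    rw [← hLdef] at hleafc
    have hN : Nat.card (Quot (chainAdjRel (G.induce S))) + 3 ≤ 4 * (L.ncard + 1) := by
      omega
    have h7 : (Nat.card (Quot (chainAdjRel (G.induce S))) : ℤ) ≤
        4 * ⌈(Fintype.card V : ℝ) / α⌉ := by
      have h8 : (Nat.card (Quot (chainAdjRel (G.induce S))) : ℤ) + 3 ≤
          4 * ((L.ncard : ℤ) + 1) := by exact_mod_cast hN
      omega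
    calc (Nat.card (Quot (chainAdjRel (G.induce S))) : ℝ)
        = (((Nat.card (Quot (chainAdjRel (G.induce S))) : ℤ)) : ℝ) := by push_cast; rfl
      _ ≤ ((4 * ⌈(Fintype.card V : ℝ) / α⌉ : ℤ) : ℝ) := by exact_mod_cast h7
      _ = 4 * (⌈(Fintype.card V : ℝ) / α⌉ : ℝ) := by push_cast; ring
end
end

section
/- Let T be a tree with at least 2 vertices in which no two adjacent vertices both have degree 2 (equivalently, T has no long chain), and let l be the number of leaves of T. Then T has at most 4l vertices. -/
open scoped Classical
noncomputable section

/-- A tree on at least `2` vertices in which no two adjacent vertices both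
have degree `2` (equivalently, with no long chain) has at most `4·l` vertices, where `l` is its
number of leaves (vertices of degree `1`). -/
theorem stmt18 {V : Type} [Fintype V] (G : SimpleGraph V) (hG : G.IsTree)
    (hcard : 2 ≤ Fintype.card V)
    (hnochain : ∀ u v, G.Adj u v → ¬ (G.degree u = 2 ∧ G.degree v = 2)) :
    Fintype.card V ≤ 4 * {v | G.degree v = 1}.ncard := by
  classical
  set L := Finset.univ.filter (fun v => G.degree v = 1) with hL
  set D := Finset.univ.filter (fun v => G.degree v = 2) with hD
  set B := Finset.univ.filter (fun v => 3 ≤ G.degree v) with hB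
  -- every vertex has positive degree
  have hdegpos : ∀ v : V, 0 < G.degree v := by
    intro v
    obtain ⟨u, hu⟩ := Fintype.exists_ne_of_one_lt_card (by omega) v
    obtain ⟨p⟩ := hG.isConnected.preconnected v u
    rw [SimpleGraph.degree_pos_iff_exists_adj]
    cases p with
    | nil => exact absurd rfl hu
    | cons h q => exact ⟨_, h⟩
  have hncard : {v | G.degree v = 1}.ncard = L.card := by
    rw [← Set.ncard_coe_finset]
    congr 1
    ext v
    simp [hL]
  -- partition of the vertex set
  have hunion : (Finset.univ : Finset V) = (L ∪ D) ∪ B := by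
    ext v
    have := hdegpos v
    simp only [Finset.mem_univ, Finset.mem_union, hL, hD, hB, Finset.mem_filter, true_and,
      true_iff]
    omega
  have hdLD : Disjoint L D := by
    rw [Finset.disjoint_left]
    intro v hv hv'
    simp [hL, hD] at hv hv'
    omega
  have hdLDB : Disjoint (L ∪ D) B := by
    rw [Finset.disjoint_left]
    intro v hv hv'
    simp [hL, hD, hB] at hv hv'
    omega
  have hdLB : Disjoint L B := by
    rw [Finset.disjoint_left]
    intro v hv hv'
    simp [hL, hB] at hv hv'
    omega
  have hpart : Fintype.card V = L.card + D.card + B.card := by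
    rw [← Finset.card_univ, hunion, Finset.card_union_of_disjoint hdLDB,
      Finset.card_union_of_disjoint hdLD]
  set S := ∑ v ∈ B, G.degree v with hS
  have hsumL : ∑ v ∈ L, G.degree v = L.card := by
    rw [Finset.sum_const_nat (m := 1) (fun v hv => by simpa [hL] using hv), mul_one]
  have hsumD : ∑ v ∈ D, G.degree v = 2 * D.card := by
    rw [Finset.sum_const_nat (m := 2) (fun v hv => by simpa [hD] using hv)]
    ring
  -- degree sum formula
  have hsum : L.card + 2 * D.card + S + 2 = 2 * Fintype.card V := by
    have h1 : ∑ v, G.degree v = 2 * G.edgeFinset.card :=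
      SimpleGraph.sum_degrees_eq_twice_card_edges G
    have h2 := hG.card_edgeFinset
    rw [hunion, Finset.sum_union hdLDB, Finset.sum_union hdLD, hsumL, hsumD] at h1
    omega
  -- branch vertices bound
  have hbranch : 3 * B.card ≤ S := by
    rw [hS]
    calc 3 * B.card = ∑ _v ∈ B, 3 := by rw [Finset.sum_const, smul_eq_mul]; ring
    _ ≤ ∑ v ∈ B, G.degree v :=
      Finset.sum_le_sum (fun v hv => by simpa [hB] using hv)
  -- degree-2 vertices bound via double counting
  set U := Finset.univ.filter (fun v => G.degree v ≠ 2) with hU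
  have hULB : U = L ∪ B := by
    ext v
    have := hdegpos v
    simp only [hU, hL, hB, Finset.mem_filter, Finset.mem_union, Finset.mem_univ, true_and]
    omega
  have h2d : 2 * D.card ≤ L.card + S := by
    have step1 : ∀ v ∈ D, G.degree v = (U.filter (G.Adj v)).card := by
      intro v hv
      rw [← SimpleGraph.card_neighborFinset_eq_degree]
      congr 1
      ext u
      simp only [SimpleGraph.mem_neighborFinset, hU, Finset.mem_filter, Finset.mem_univ,
        true_and]
      constructor
      · intro hadj
        exact ⟨fun hu2 => hnochain v u hadj ⟨by simpa [hD] using hv, hu2⟩, hadj⟩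
      · exact fun h => h.2
    have swap : ∑ v ∈ D, (U.filter (G.Adj v)).card
        = ∑ u ∈ U, (D.filter (fun v => G.Adj v u)).card := by
      simp_rw [Finset.card_filter]
      exact Finset.sum_comm
    calc 2 * D.card = ∑ v ∈ D, G.degree v := hsumD.symm
      _ = ∑ v ∈ D, (U.filter (G.Adj v)).card := Finset.sum_congr rfl step1
      _ = ∑ u ∈ U, (D.filter (fun v => G.Adj v u)).card := swap
      _ ≤ ∑ u ∈ U, G.degree u := by
          refine Finset.sum_le_sum fun u _ => ?_
          rw [← SimpleGraph.card_neighborFinset_eq_degree]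
          refine Finset.card_le_card fun v hv => ?_
          rw [SimpleGraph.mem_neighborFinset]
          exact (Finset.mem_filter.1 hv).2.symm
      _ = L.card + S := by rw [hULB, Finset.sum_union hdLB, hsumL]
  rw [hncard]
  omega
end
end
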